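/- arXiv:2009.08620 — 14 statements merged into one kernel-verified Lean document; each statement's English description precedes it below -/
import Mathlib

section
/- Let σ be the cyclic permutation of {1,…,N+1} with σ(1) = N+1 and σ(i) = i−1 for 2 ≤ i ≤ N+1. For every k with 1 ≤ k ≤ N+1, the matrix B_k := (μ_k ∘ ⋯ ∘ μ_2 ∘ μ_1)(B_0) satisfies (B_k)_{ij} = (B_0)_{σ^k(i), σ^k(j)} for all i, j ∈ {1,…,N+1}; in particular B_{N+1} = B_0, and consequently the sequence B_m obtained by applying μ_1, μ_2, …, μ_{N+1}, μ_1, … cyclically to B_0 satisfies B_{ℓ(N+1)+k} = B_k for all ℓ ≥ 0. -/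
/-- The initial exchange matrix `B₀` of type `A^{(1)}_N` (indices `1, …, N+1`). -/
def b0 (N : ℕ) : ℕ → ℕ → ℤ := fun i j =>
  if 1 ≤ i ∧ i ≤ N ∧ j = i + 1 then -1
  else if 2 ≤ i ∧ i ≤ N + 1 ∧ j + 1 = i then 1
  else if i = 1 ∧ j = N + 1 then -1
  else if i = N + 1 ∧ j = 1 then 1
  else 0

/-- Matrix mutation `μ_k` in direction `k`. -/
def bmut (k : ℕ) (B : ℕ → ℕ → ℤ) : ℕ → ℕ → ℤ := fun i j =>
  if i = k ∨ j = k then -B i j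
  else B i j + max (-B i k) 0 * B k j + B i k * max (B k j) 0

/-- `Bseq N m` is the matrix obtained from `B₀` by applying `μ₁, μ₂, …, μ_{N+1}, μ₁, …`
cyclically, `m` times. -/
def Bseq (N : ℕ) : ℕ → ℕ → ℕ → ℤ
  | 0 => b0 N
  | m + 1 => bmut (m % (N + 1) + 1) (Bseq N m)

/-- The cyclic permutation `σ` of `{1, …, N+1}` with `σ 1 = N+1` and `σ i = i - 1` otherwise. -/
def sig (N : ℕ) : ℕ → ℕ := fun i => if i = 1 then N + 1 else i - 1

/-- Explicit formula for the `k`-th iterate of `sig` on `{1,…,N+1}`. -/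
def ff (N k i : ℕ) : ℕ := if k < i then i - k else i + N + 1 - k

lemma ff_range (N k i : ℕ) (hk : k ≤ N + 1) (hi1 : 1 ≤ i) (hi2 : i ≤ N + 1) :
    1 ≤ ff N k i ∧ ff N k i ≤ N + 1 := by
  simp only [ff]; split <;> omega

lemma ff_zero (N i : ℕ) (hi1 : 1 ≤ i) : ff N 0 i = i := by
  simp only [ff]; split <;> omega

lemma ff_succ (N k i : ℕ) (hk : k ≤ N) (hi1 : 1 ≤ i) (hi2 : i ≤ N + 1) :
    sig N (ff N k i) = ff N (k + 1) i := by
  simp only [ff, sig]; split_ifs <;> omega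

lemma ff_eq_one (N k i : ℕ) (hk : k ≤ N) (hi1 : 1 ≤ i) (hi2 : i ≤ N + 1) :
    ff N k i = 1 ↔ i = k + 1 := by
  simp only [ff]; split <;> omega

lemma ff_k1 (N k : ℕ) (hk : k ≤ N) : ff N k (k + 1) = 1 := by
  simp only [ff]; split <;> omega

lemma ff_last (N i : ℕ) (hi1 : 1 ≤ i) (hi2 : i ≤ N + 1) : ff N (N + 1) i = i := by
  simp only [ff]; split <;> omega

lemma sig_iter (N k i : ℕ) (hk : k ≤ N + 1) (hi1 : 1 ≤ i) (hi2 : i ≤ N + 1) :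
    (sig N)^[k] i = ff N k i := by
  induction k with
  | zero => simpa using (ff_zero N i hi1).symm
  | succ k IH =>
      rw [Function.iterate_succ_apply', IH (by omega),
        ff_succ N k i (by omega) hi1 hi2]

lemma b0_col1_max (N i : ℕ) (hi : 2 ≤ i) : max (-(b0 N i 1)) 0 = 0 := by
  simp only [b0]; split_ifs <;> simp <;> omega

lemma b0_row1_max (N j : ℕ) (hN : 2 ≤ N) (hj : 2 ≤ j) : max (b0 N 1 j) 0 = 0 := by
  simp only [b0]; split_ifs <;> simp <;> omega

lemma b0_shift (N : ℕ) (hN : 2 ≤ N) (i j : ℕ) (hi1 : 2 ≤ i) (hi2 : i ≤ N + 1)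
    (hj1 : 2 ≤ j) (hj2 : j ≤ N + 1) : b0 N i j = b0 N (i - 1) (j - 1) := by
  simp only [b0]; split_ifs <;> omega

lemma b0_edge (N : ℕ) (hN : 2 ≤ N) (i j : ℕ) (hi1 : 1 ≤ i) (hi2 : i ≤ N + 1)
    (hj1 : 1 ≤ j) (hj2 : j ≤ N + 1) (h : i = 1 ∨ j = 1) :
    -b0 N i j = b0 N (sig N i) (sig N j) := by
  by_cases hi : i = 1 <;> by_cases hj : j = 1
  · subst hi hj; show -b0 N 1 1 = b0 N (N + 1) (N + 1)
    simp only [b0]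
    split_ifs <;> first | omega | (simp only [true_and, and_true] at *; omega)
  · subst hi
    have hsj : sig N j = j - 1 := by simp only [sig, if_neg hj]
    rw [hsj]; show -b0 N 1 j = b0 N (N + 1) (j - 1)
    simp only [b0]
    split_ifs <;> first | omega | (simp only [true_and, and_true] at *; omega)
  · subst hj
    have hsi : sig N i = i - 1 := by simp only [sig, if_neg hi]
    rw [hsi]; show -b0 N i 1 = b0 N (i - 1) (N + 1)
    simp only [b0]
    split_ifs <;> first | omega | (simp only [true_and, and_true] at *; omega)
  · tauto

/-- Mutation of `B₀` at vertex `1` is conjugation by `σ`. -/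
lemma mut1 (N : ℕ) (hN : 2 ≤ N) (i j : ℕ) (hi1 : 1 ≤ i) (hi2 : i ≤ N + 1)
    (hj1 : 1 ≤ j) (hj2 : j ≤ N + 1) :
    bmut 1 (b0 N) i j = b0 N (sig N i) (sig N j) := by
  rw [bmut]
  by_cases h : i = 1 ∨ j = 1
  · rw [if_pos h]; exact b0_edge N hN i j hi1 hi2 hj1 hj2 h
  · push_neg at h
    rw [if_neg (by tauto)]
    rw [b0_col1_max N i (by omega), b0_row1_max N j hN (by omega)]
    have hsi : sig N i = i - 1 := by simp only [sig, if_neg h.1]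
    have hsj : sig N j = j - 1 := by simp only [sig, if_neg h.2]
    rw [hsi, hsj, ← b0_shift N hN i j (by omega) hi2 (by omega) hj2]
    ring

/-- Main inductive formula: `B_k = B₀ ∘ σ^k` (entrywise, on the index range). -/
lemma Bseq_formula (N : ℕ) (hN : 2 ≤ N) :
    ∀ k, k ≤ N + 1 → ∀ i j, 1 ≤ i → i ≤ N + 1 → 1 ≤ j → j ≤ N + 1 →
      Bseq N k i j = b0 N (ff N k i) (ff N k j) := by
  intro k
  induction k with
  | zero =>
      intro _ i j hi1 hi2 hj1 hj2
      rw [ff_zero N i hi1, ff_zero N j hj1]; rfl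
  | succ k IH =>
      intro hk i j hi1 hi2 hj1 hj2
      have hk' : k ≤ N := by omega
      have hmod : k % (N + 1) = k := Nat.mod_eq_of_lt (by omega)
      have e0 : Bseq N (k + 1) i j = bmut (k + 1) (Bseq N k) i j := by
        show bmut (k % (N + 1) + 1) (Bseq N k) i j = _
        rw [hmod]
      rw [e0]
      have IHij := IH (by omega) i j hi1 hi2 hj1 hj2
      have IHik := IH (by omega) i (k + 1) hi1 hi2 (by omega) (by omega)
      have IHkj := IH (by omega) (k + 1) j (by omega) (by omega) hj1 hj2
      rw [ff_k1 N k hk'] at IHik IHkj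
      have hfi := ff_range N k i (by omega) hi1 hi2
      have hfj := ff_range N k j (by omega) hj1 hj2
      have key := mut1 N hN (ff N k i) (ff N k j) hfi.1 hfi.2 hfj.1 hfj.2
      rw [bmut] at key
      have hcond : (i = k + 1 ∨ j = k + 1) ↔ (ff N k i = 1 ∨ ff N k j = 1) := by
        rw [ff_eq_one N k i hk' hi1 hi2, ff_eq_one N k j hk' hj1 hj2]
      rw [bmut, IHij, IHik, IHkj]
      by_cases h : ff N k i = 1 ∨ ff N k j = 1
      · rw [if_pos (hcond.mpr h)]
        rw [if_pos h] at key
        rw [key, ff_succ N k i hk' hi1 hi2, ff_succ N k j hk' hj1 hj2]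
      · rw [if_neg (fun hh => h (hcond.mp hh))]
        rw [if_neg h] at key
        rw [key, ff_succ N k i hk' hi1 hi2, ff_succ N k j hk' hj1 hj2]

lemma Bseq_period (N : ℕ) (hN : 2 ≤ N) :
    ∀ m i j, 1 ≤ i → i ≤ N + 1 → 1 ≤ j → j ≤ N + 1 →
      Bseq N (m + (N + 1)) i j = Bseq N m i j := by
  intro m
  induction m with
  | zero =>
      intro i j hi1 hi2 hj1 hj2
      have := Bseq_formula N hN (N + 1) le_rfl i j hi1 hi2 hj1 hj2
      rw [Nat.zero_add, this, ff_last N i hi1 hi2, ff_last N j hj1 hj2]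
      rfl
  | succ m IH =>
      intro i j hi1 hi2 hj1 hj2
      have e : m + 1 + (N + 1) = (m + (N + 1)) + 1 := by omega
      rw [e]
      show bmut ((m + (N + 1)) % (N + 1) + 1) (Bseq N (m + (N + 1))) i j
        = bmut (m % (N + 1) + 1) (Bseq N m) i j
      rw [Nat.add_mod_right]
      set c := m % (N + 1) + 1 with hc
      have hc1 : 1 ≤ c := by omega
      have hc2 : c ≤ N + 1 := by
        have := Nat.mod_lt m (show 0 < N + 1 by omega); omega
      rw [bmut, bmut, IH i j hi1 hi2 hj1 hj2, IH i c hi1 hi2 hc1 hc2,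
        IH c j hc1 hc2 hj1 hj2]

theorem stmt0 (N : ℕ) (hN : 2 ≤ N) :
    (∀ k, 1 ≤ k → k ≤ N + 1 → ∀ i j, 1 ≤ i → i ≤ N + 1 → 1 ≤ j → j ≤ N + 1 →
        Bseq N k i j = b0 N ((sig N)^[k] i) ((sig N)^[k] j)) ∧
    (∀ i j, 1 ≤ i → i ≤ N + 1 → 1 ≤ j → j ≤ N + 1 →
        Bseq N (N + 1) i j = b0 N i j) ∧
    (∀ ℓ k, 1 ≤ k → k ≤ N + 1 → ∀ i j, 1 ≤ i → i ≤ N + 1 → 1 ≤ j → j ≤ N + 1 →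
        Bseq N (ℓ * (N + 1) + k) i j = Bseq N k i j) := by
  refine ⟨?_, ?_, ?_⟩
  · intro k hk1 hk2 i j hi1 hi2 hj1 hj2
    rw [sig_iter N k i hk2 hi1 hi2, sig_iter N k j hk2 hj1 hj2]
    exact Bseq_formula N hN k hk2 i j hi1 hi2 hj1 hj2
  · intro i j hi1 hi2 hj1 hj2
    rw [Bseq_formula N hN (N + 1) le_rfl i j hi1 hi2 hj1 hj2,
      ff_last N i hi1 hi2, ff_last N j hj1 hj2]
  · intro ℓ k hk1 hk2 i j hi1 hi2 hj1 hj2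
    induction ℓ with
    | zero => rw [Nat.zero_mul, Nat.zero_add]
    | succ ℓ IH =>
        have e : (ℓ + 1) * (N + 1) + k = (ℓ * (N + 1) + k) + (N + 1) := by ring
        rw [e, Bseq_period N hN (ℓ * (N + 1) + k) i j hi1 hi2 hj1 hj2, IH]
end

section
/- For every m ≥ 0, the Cartan counterpart A(B_m) := (2δ_{ij} − |(B_m)_{ij}|) of the exchange matrix B_m equals the generalized Cartan matrix of type A^{(1)}_N, namely the (N+1)×(N+1) integer matrix C with C_{ii} = 2 for all i, C_{i,i+1} = C_{i+1,i} = −1 for 1 ≤ i ≤ N, C_{1,N+1} = C_{N+1,1} = −1, and all other entries 0. -/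
/-- The generalized Cartan matrix of type `A^{(1)}_N` (indices `1, …, N+1`). -/
def cartanA (N : ℕ) : ℕ → ℕ → ℤ := fun i j =>
  if i = j then 2
  else if (1 ≤ i ∧ i ≤ N ∧ j = i + 1) ∨ (2 ≤ i ∧ i ≤ N + 1 ∧ j + 1 = i) ∨
          (i = 1 ∧ j = N + 1) ∨ (i = N + 1 ∧ j = 1) then -1
  else 0

/-!
Every `B_m` is `D B₀ D` for a diagonal sign matrix `D`, namely `D = diag(-1, …, -1, 1, …, 1)`
with `m mod (N+1)` entries `-1`. In `D B₀ D` the vertex `m mod (N+1) + 1` about to be mutated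
is a sink, and mutation at a sink only reverses the arrows at that vertex, i.e. flips its sign
in `D`. Conjugating by signs does not change absolute values, so `A(B_m) = A(B₀)`, the Cartan
matrix of type `A^{(1)}_N`.
-/

/-- The matrix `D B D` for the diagonal matrix `D = diag(s)`. -/
def signConj (s : ℕ → ℤ) (B : ℕ → ℕ → ℤ) : ℕ → ℕ → ℤ := fun i j => s i * s j * B i j

lemma abs_signConj {s : ℕ → ℤ} (hs : ∀ i, |s i| = 1) (B : ℕ → ℕ → ℤ) (i j : ℕ) :
    |signConj s B i j| = |B i j| := by
  simp [signConj, abs_mul, hs]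

lemma signConj_eq_self {s : ℕ → ℤ} {B : ℕ → ℕ → ℤ} (h : ∀ i j, B i j ≠ 0 → s i * s j = 1) :
    signConj s B = B := by
  funext i j
  by_cases hB : B i j = 0
  · simp [signConj, hB]
  · simp [signConj, h i j hB]

lemma bmut_of_sink {k : ℕ} {B : ℕ → ℕ → ℤ} (hcol : ∀ i, 0 ≤ B i k) (hrow : ∀ j, B k j ≤ 0) :
    bmut k B = fun i j => if i = k ∨ j = k then -B i j else B i j := by
  funext i j
  simp only [bmut, max_eq_right (neg_nonpos.mpr (hcol i)), max_eq_right (hrow j)]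
  split_ifs <;> ring

lemma bmut_signConj_of_sink {k : ℕ} {s : ℕ → ℤ} {B : ℕ → ℕ → ℤ} (hB : B k k = 0)
    (hcol : ∀ i, 0 ≤ signConj s B i k) (hrow : ∀ j, signConj s B k j ≤ 0) :
    bmut k (signConj s B) = signConj (Function.update s k (-s k)) B := by
  rw [bmut_of_sink hcol hrow]
  funext i j
  by_cases hi : i = k <;> by_cases hj : j = k
  · subst hi hj; simp [signConj, hB]
  all_goals simp [signConj, Function.update, hi, hj]

def negBelow (r i : ℕ) : ℤ := if i ≤ r then -1 else 1

lemma abs_negBelow (r i : ℕ) : |negBelow r i| = 1 := by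
  unfold negBelow; split_ifs <;> norm_num

lemma update_negBelow (r : ℕ) :
    Function.update (negBelow r) (r + 1) (-negBelow r (r + 1)) = negBelow (r + 1) := by
  funext i
  by_cases hi : i = r + 1
  · subst hi; simp [negBelow]
  · simp only [Function.update, hi, dite_false, negBelow]
    split_ifs <;> omega

lemma b0_self {N : ℕ} (hN : 0 < N) (i : ℕ) : b0 N i i = 0 := by
  unfold b0; split_ifs <;> omega

lemma mem_Icc_of_b0_ne_zero {N i j : ℕ} (h : b0 N i j ≠ 0) :
    1 ≤ i ∧ i ≤ N + 1 ∧ 1 ≤ j ∧ j ≤ N + 1 := by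
  unfold b0 at h; split_ifs at h <;> omega

lemma signConj_negBelow_b0_col_nonneg {N r : ℕ} (hN : 0 < N) (hr : r ≤ N) (i : ℕ) :
    0 ≤ signConj (negBelow r) (b0 N) i (r + 1) := by
  unfold signConj negBelow b0; split_ifs <;> omega

lemma signConj_negBelow_b0_row_nonpos {N r : ℕ} (j : ℕ) :
    signConj (negBelow r) (b0 N) (r + 1) j ≤ 0 := by
  unfold signConj negBelow b0; split_ifs <;> omega

lemma signConj_negBelow_zero_b0 (N : ℕ) : signConj (negBelow 0) (b0 N) = b0 N :=
  signConj_eq_self fun i j h => by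
    obtain ⟨hi, -, hj, -⟩ := mem_Icc_of_b0_ne_zero h
    simp [negBelow, show ¬ i ≤ 0 by omega, show ¬ j ≤ 0 by omega]

-- After a full round all of `1, …, N+1` are flipped, and `D = -1` conjugates trivially.
lemma signConj_negBelow_succ_b0 (N : ℕ) : signConj (negBelow (N + 1)) (b0 N) = b0 N :=
  signConj_eq_self fun i j h => by
    obtain ⟨-, hi, -, hj⟩ := mem_Icc_of_b0_ne_zero h
    simp [negBelow, hi, hj]

lemma Bseq_eq_signConj {N : ℕ} (hN : 0 < N) (m : ℕ) :
    Bseq N m = signConj (negBelow (m % (N + 1))) (b0 N) := by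
  induction m with
  | zero => simp [Bseq, signConj_negBelow_zero_b0]
  | succ m ih =>
    have hr : m % (N + 1) ≤ N := Nat.lt_succ_iff.mp (Nat.mod_lt _ N.succ_pos)
    rw [Bseq, ih, bmut_signConj_of_sink (b0_self hN _)
      (signConj_negBelow_b0_col_nonneg hN hr) signConj_negBelow_b0_row_nonpos,
      update_negBelow]
    rcases hr.lt_or_eq with hlt | heq
    · rw [Nat.add_mod, Nat.mod_eq_of_lt (show 1 < N + 1 by omega),
        Nat.mod_eq_of_lt (show m % (N + 1) + 1 < N + 1 by omega)]
    · rw [heq, Nat.succ_mod_succ_eq_zero_iff.mpr heq, signConj_negBelow_succ_b0,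
        signConj_negBelow_zero_b0]

lemma diag_sub_abs_b0 {N i j : ℕ} (hN : 0 < N) (hi : 1 ≤ i) (hi' : i ≤ N + 1)
    (hj : 1 ≤ j) (hj' : j ≤ N + 1) :
    (if i = j then (2 : ℤ) else 0) - |b0 N i j| = cartanA N i j := by
  unfold b0 cartanA; split_ifs <;> (try norm_num) <;> omega

theorem stmt1 (N : ℕ) (hN : 2 ≤ N) :
    ∀ m : ℕ, ∀ i j, 1 ≤ i → i ≤ N + 1 → 1 ≤ j → j ≤ N + 1 →
      (if i = j then (2 : ℤ) else 0) - |Bseq N m i j| = cartanA N i j := by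
  intro m i j hi hi' hj hj'
  rw [Bseq_eq_signConj (by omega), abs_signConj (abs_negBelow _)]
  exact diag_sub_abs_b0 (by omega) hi hi' hj hj'
end

section
/- After one full cycle of mutations, every coefficient is the tropical inverse of the initial one: y_{j;N+1} = −u_j (the exponent vector of (y_j)^{−1}) for every j = 1,…,N+1. -/
/-- Tropical coefficient mutation `μ_k` acting on the tuple of exponent vectors
(`y j : Fin (N+1) → ℤ` is the exponent vector of the `j`-th coefficient):
`y'_k = -y_k` and, for `j ≠ k`, `y'_j = y_j + [b_{kj}]₊ • y_k - b_{kj} • min (y_k, 0)`. -/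
def coefMut (N k : ℕ) (B : ℕ → ℕ → ℤ) (y : ℕ → Fin (N + 1) → ℤ) :
    ℕ → Fin (N + 1) → ℤ := fun j i =>
  if j = k then -(y k i)
  else y j i + max (B k j) 0 * y k i - B k j * min (y k i) 0

/-- `seedY N m j`: the exponent vector of the `j`-th coefficient after `m` cyclic mutations,
starting from the standard basis vectors (coordinate `i : Fin (N+1)` encodes the variable
`y_{i+1}`). -/
def seedY (N : ℕ) : ℕ → ℕ → Fin (N + 1) → ℤ
  | 0 => fun j i => if (i : ℕ) + 1 = j then 1 else 0
  | m + 1 => coefMut N (m % (N + 1) + 1) (Bseq N m) (seedY N m)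


def Eps (m x : ℕ) : ℤ := if x ≤ m then -1 else 1

lemma sign1 (N m i : ℕ) (hN : 2 ≤ N) (_hm : m ≤ N) :
    0 ≤ Eps m i * b0 N i (m+1) := by
  unfold Eps b0
  split_ifs <;> norm_num <;> omega

lemma sign2 (N m j : ℕ) (hN : 2 ≤ N) (_hm : m ≤ N) :
    Eps m j * b0 N (m+1) j ≤ 0 := by
  unfold Eps b0
  split_ifs <;> norm_num <;> omega

lemma key (N : ℕ) (hN : 2 ≤ N) :
    ∀ m, m ≤ N + 1 →
      (∀ i j, Bseq N m i j = Eps m i * Eps m j * b0 N i j) ∧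
      (∀ j i, seedY N m j i = Eps m j * (if (i : ℕ) + 1 = j then 1 else 0)) := by
  intro m
  induction m with
  | zero =>
    intro _
    constructor
    · intro i j
      show b0 N i j = _
      unfold Eps b0
      split_ifs <;> norm_num <;> omega
    · intro j i
      show (if (i : ℕ) + 1 = j then (1:ℤ) else 0) = _
      unfold Eps
      split_ifs <;> norm_num <;> omega
  | succ m ih =>
    intro hm1
    have hm : m ≤ N := by omega
    obtain ⟨hB, hY⟩ := ih (by omega)
    have hk : m % (N + 1) + 1 = m + 1 := by rw [Nat.mod_eq_of_lt (by omega)]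
    have hEk : Eps m (m+1) = 1 := by unfold Eps; split_ifs <;> omega
    have hik : ∀ i, 0 ≤ Bseq N m i (m+1) := by
      intro i; rw [hB, hEk, mul_one]; exact sign1 N m i hN hm
    have hkj : ∀ j, Bseq N m (m+1) j ≤ 0 := by
      intro j; rw [hB, hEk, one_mul]; exact sign2 N m j hN hm
    have hEps : ∀ x, x ≠ m + 1 → Eps (m+1) x = Eps m x := by
      intro x hx; unfold Eps; split_ifs <;> omega
    have hEk1 : Eps (m+1) (m+1) = -1 := by unfold Eps; split_ifs <;> omega
    constructor
    · intro i j
      show bmut (m % (N+1) + 1) (Bseq N m) i j = _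
      rw [hk]
      unfold bmut
      split_ifs with h
      · rcases h with h | h
        · subst h
          rcases eq_or_ne j (m+1) with rfl | hj
          · rw [hB, hEk, hEk1]
            have : b0 N (m+1) (m+1) = 0 := by unfold b0; split_ifs <;> omega
            rw [this]; ring
          · rw [hB, hEk, hEps j hj, hEk1]; ring
        · subst h
          rcases eq_or_ne i (m+1) with rfl | hi
          · rw [hB, hEk, hEk1]
            have : b0 N (m+1) (m+1) = 0 := by unfold b0; split_ifs <;> omega
            rw [this]; ring
          · rw [hB, hEk, hEps i hi, hEk1]; ring
      · push_neg at h
        obtain ⟨hi, hj⟩ := h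
        rw [max_eq_right (by linarith [hik i]), max_eq_right (hkj j)]
        rw [hB i j, hEps i hi, hEps j hj]; ring
    · intro j i
      show coefMut N (m % (N+1) + 1) (Bseq N m) (seedY N m) j i = _
      rw [hk]
      unfold coefMut
      have hy0 : 0 ≤ seedY N m (m+1) i := by
        rw [hY, hEk, one_mul]; split_ifs <;> norm_num
      rcases eq_or_ne j (m+1) with rfl | h
      · rw [if_pos rfl, hY, hEk, hEk1]; ring
      · rw [if_neg h, max_eq_right (hkj j), min_eq_right hy0, hY j i, hEps j h]; ring

theorem stmt2 (N : ℕ) (hN : 2 ≤ N) :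
    ∀ j, 1 ≤ j → j ≤ N + 1 →
      seedY N (N + 1) j = fun i : Fin (N + 1) => -(if (i : ℕ) + 1 = j then 1 else 0) := by
  intro j _ hj2
  funext i
  rw [(key N hN (N+1) le_rfl).2 j i]
  have : Eps (N+1) j = -1 := by unfold Eps; split_ifs <;> omega
  rw [this]; ring
end

section
/- For every ℓ ≥ 1 the coefficient tuples y^ℓ := (y_{1;ℓ(N+1)}, …, y_{N+1;ℓ(N+1)}) satisfy the recurrence (written additively in exponent vectors): y_1^{ℓ+1} = 2y_1^ℓ + 2y_2^ℓ + y_3^ℓ + ⋯ + y_{N+1}^ℓ; y_j^{ℓ+1} = y_{j+1}^ℓ for 2 ≤ j ≤ N−1; y_N^{ℓ+1} = y_1^ℓ + y_{N+1}^ℓ; and y_{N+1}^{ℓ+1} = −(2y_1^ℓ + y_2^ℓ + y_3^ℓ + ⋯ + y_{N+1}^ℓ). -/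
set_option maxHeartbeats 1600000


/-! ### The exchange matrices along the mutation cycle -/

def Bt (N t : ℕ) : ℕ → ℕ → ℤ := fun i j =>
  if t = 0 then b0 N i j
  else if (i = t ∧ j = t + 1) ∨ (i = 1 ∧ j = N + 1) then 1
  else if (i = t + 1 ∧ j = t) ∨ (i = N + 1 ∧ j = 1) then -1
  else b0 N i j

lemma Bt_zero (N : ℕ) : Bt N 0 = b0 N := by
  funext i j; simp [Bt]

lemma Bt_entry (N t : ℕ) (hN : 2 ≤ N) (ht1 : 1 ≤ t) (ht : t ≤ N) (i j : ℕ) :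
    Bt N t i j =
      if (i = t ∧ j = t + 1) ∨ (i = 1 ∧ j = N + 1) ∨
          (2 ≤ i ∧ i ≤ N + 1 ∧ j + 1 = i ∧ ¬(i = t + 1)) then 1
      else if (i = t + 1 ∧ j = t) ∨ (i = N + 1 ∧ j = 1) ∨
          (1 ≤ i ∧ i ≤ N ∧ j = i + 1 ∧ ¬(i = t)) then -1
      else 0 := by
  simp only [Bt, b0]
  split_ifs <;> first | omega | (simp only [true_and, and_true] at *; omega)

lemma bmut_of_signs (k : ℕ) (B : ℕ → ℕ → ℤ) (hrow : ∀ j, B k j ≤ 0)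
    (hcol : ∀ i, 0 ≤ B i k) :
    bmut k B = fun i j => if i = k ∨ j = k then -B i j else B i j := by
  funext i j
  simp only [bmut]
  split_ifs with h
  · rfl
  · have h1 : max (-B i k) 0 = 0 := by have := hcol i; omega
    have h2 : max (B k j) 0 = 0 := by have := hrow j; omega
    rw [h1, h2]; ring

lemma Bt_row (N t : ℕ) (hN : 2 ≤ N) (ht1 : 1 ≤ t) (ht : t ≤ N) (j : ℕ) :
    Bt N t (t + 1) j =
      if (t < N ∧ (j = t ∨ j = t + 2)) ∨ (t = N ∧ (j = 1 ∨ j = N)) then -1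
      else 0 := by
  rw [Bt_entry N t hN ht1 ht]
  split_ifs <;> omega

lemma b0_row (N : ℕ) (hN : 2 ≤ N) (j : ℕ) :
    b0 N 1 j = if j = 2 ∨ j = N + 1 then -1 else 0 := by
  simp only [b0]
  split_ifs <;> first | omega | (simp only [true_and, and_true] at *; omega)

lemma Bt_row_nonpos (N t : ℕ) (hN : 2 ≤ N) (ht : t ≤ N) (j : ℕ) :
    Bt N t (t + 1) j ≤ 0 := by
  rcases Nat.eq_zero_or_pos t with h | h
  · subst h; rw [Bt_zero, b0_row N hN]; split_ifs <;> omega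
  · rw [Bt_row N t hN h ht]; split_ifs <;> omega

lemma Bt_col_nonneg (N t : ℕ) (hN : 2 ≤ N) (ht : t ≤ N) (i : ℕ) :
    0 ≤ Bt N t i (t + 1) := by
  rcases Nat.eq_zero_or_pos t with h | h
  · subst h; rw [Bt_zero]; simp only [b0]; split_ifs <;> omega
  · rw [Bt_entry N t hN h ht]; split_ifs <;> omega

lemma bmut_Bt (N t : ℕ) (hN : 2 ≤ N) (ht : t ≤ N) :
    bmut (t + 1) (Bt N t) = Bt N ((t + 1) % (N + 1)) := by
  rw [bmut_of_signs _ _ (Bt_row_nonpos N t hN ht) (Bt_col_nonneg N t hN ht)]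
  funext i j
  rcases Nat.eq_zero_or_pos t with h0 | h1
  · subst h0
    rw [Nat.mod_eq_of_lt (by omega), Bt_zero,
      Bt_entry N 1 hN le_rfl (by omega) i j]
    simp only [b0]
    split_ifs <;> first | omega | (simp only [true_and, and_true] at *; omega)
  · rcases Nat.lt_or_ge t N with hlt | hge
    · rw [Nat.mod_eq_of_lt (by omega), Bt_entry N t hN h1 ht i j,
        Bt_entry N (t + 1) hN (by omega) (by omega) i j]
      split_ifs <;> first | omega | (simp only [true_and, and_true] at *; omega)
    · have htN : t = N := le_antisymm ht hge
      rw [htN, Nat.mod_self, Bt_zero, Bt_entry N N hN (htN ▸ h1) le_rfl i j]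
      simp only [b0]
      split_ifs <;> first | omega | (simp only [true_and, and_true] at *; omega)

lemma Bseq_eq (N : ℕ) (hN : 2 ≤ N) (m : ℕ) : Bseq N m = Bt N (m % (N + 1)) := by
  induction m with
  | zero => simp [Bseq, Bt_zero]
  | succ m ih =>
      have hm : m % (N + 1) ≤ N := by
        have := Nat.mod_lt m (show 0 < N + 1 by omega); omega
      rw [show Bseq N (m + 1) = bmut (m % (N + 1) + 1) (Bseq N m) from rfl, ih,
        bmut_Bt N _ hN hm]
      have h1 : 1 % (N + 1) = 1 := Nat.mod_eq_of_lt (by omega)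
      rw [Nat.add_mod m 1, h1]

/-! ### Coefficient mutation helpers -/

lemma seedY_succ (N m : ℕ) :
    seedY N (m + 1) = coefMut N (m % (N + 1) + 1) (Bseq N m) (seedY N m) := rfl

lemma coefMut_self (N k : ℕ) (B : ℕ → ℕ → ℤ) (y : ℕ → Fin (N + 1) → ℤ)
    (i : Fin (N + 1)) : coefMut N k B y k i = -(y k i) := by simp [coefMut]

lemma coefMut_of_zero (N k j : ℕ) (B : ℕ → ℕ → ℤ) (y : ℕ → Fin (N + 1) → ℤ)
    (i : Fin (N + 1)) (hj : j ≠ k) (h : B k j = 0) :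
    coefMut N k B y j i = y j i := by
  simp [coefMut, hj, h]

lemma coefMut_of_neg (N k j : ℕ) (B : ℕ → ℕ → ℤ) (y : ℕ → Fin (N + 1) → ℤ)
    (i : Fin (N + 1)) (hj : j ≠ k) (h : B k j = -1) (hy : y k i ≤ 0) :
    coefMut N k B y j i = y j i + y k i := by
  simp only [coefMut, if_neg hj, h]
  rw [min_eq_left hy]
  norm_num

lemma coefMut_of_nonneg (N k j : ℕ) (B : ℕ → ℕ → ℤ) (y : ℕ → Fin (N + 1) → ℤ)
    (i : Fin (N + 1)) (hj : j ≠ k) (hB : B k j ≤ 0) (hy : 0 ≤ y k i) :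
    coefMut N k B y j i = y j i := by
  simp only [coefMut, if_neg hj]
  rw [min_eq_right hy, max_eq_right hB]
  ring

/-! ### The first cycle -/

lemma first_cycle_states (N : ℕ) (hN : 2 ≤ N) :
    ∀ t, t ≤ N + 1 → ∀ j (i : Fin (N + 1)),
      seedY N t j i = if (i : ℕ) + 1 = j then (if j ≤ t then -1 else 1) else 0 := by
  intro t
  induction t with
  | zero =>
      intro _ j i
      show (if (i : ℕ) + 1 = j then (1 : ℤ) else 0) = _
      split_ifs <;> omega
  | succ t ih =>
      intro ht j i
      have ht' : t ≤ N := by omega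
      have hmod : t % (N + 1) = t := Nat.mod_eq_of_lt (by omega)
      rw [seedY_succ, Bseq_eq N hN, hmod]
      have hy : 0 ≤ seedY N t (t + 1) i := by
        rw [ih (by omega) (t + 1) i]
        split_ifs <;> omega
      by_cases hjk : j = t + 1
      · subst hjk
        rw [coefMut_self, ih (by omega) (t + 1) i]
        split_ifs <;> omega
      · rw [coefMut_of_nonneg N (t + 1) j _ _ i hjk (Bt_row_nonpos N t hN ht' j) hy,
          ih (by omega) j i]
        split_ifs <;> omega

lemma seedY_cycle_one (N : ℕ) (hN : 2 ≤ N) (j : ℕ) (i : Fin (N + 1)) :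
    seedY N (1 * (N + 1)) j i = if (i : ℕ) + 1 = j then -1 else 0 := by
  have hi := i.isLt
  rw [one_mul, first_cycle_states N hN (N + 1) le_rfl j i]
  split_ifs <;> omega

/-! ### Partial sums -/

def Sm (N ℓ t : ℕ) (i : Fin (N + 1)) : ℤ :=
  ∑ j ∈ Finset.Icc 1 t, seedY N (ℓ * (N + 1)) j i

lemma Sm_succ (N ℓ t : ℕ) (i : Fin (N + 1)) :
    Sm N ℓ (t + 1) i = Sm N ℓ t i + seedY N (ℓ * (N + 1)) (t + 1) i :=
  Finset.sum_Icc_succ_top (by omega) _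

lemma Sm_one (N ℓ : ℕ) (i : Fin (N + 1)) :
    Sm N ℓ 1 i = seedY N (ℓ * (N + 1)) 1 i := by
  simp [Sm]

lemma Sm_nonpos (N ℓ t : ℕ)
    (hY : ∀ j, 1 ≤ j → j ≤ N → ∀ i, seedY N (ℓ * (N + 1)) j i ≤ 0)
    (ht : t ≤ N) (i : Fin (N + 1)) : Sm N ℓ t i ≤ 0 :=
  Finset.sum_nonpos fun j hj => by
    rw [Finset.mem_Icc] at hj
    exact hY j hj.1 (le_trans hj.2 ht) i

/-! ### States within one mutation cycle -/

lemma cycle_states (N : ℕ) (hN : 2 ≤ N) (ℓ : ℕ)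
    (hY : ∀ j, 1 ≤ j → j ≤ N → ∀ i, seedY N (ℓ * (N + 1)) j i ≤ 0) :
    ∀ t, 1 ≤ t → t ≤ N →
      (∀ j, 1 ≤ j → j < t → ∀ i, seedY N (ℓ * (N + 1) + t) j i =
          seedY N (ℓ * (N + 1)) (j + 1) i) ∧
      (∀ i, seedY N (ℓ * (N + 1) + t) t i = -(Sm N ℓ t i)) ∧
      (∀ j, t < j → j ≤ N → ∀ i, seedY N (ℓ * (N + 1) + t) j i =
          seedY N (ℓ * (N + 1)) j i + (if j = t + 1 then Sm N ℓ t i else 0)) ∧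
      (∀ i, seedY N (ℓ * (N + 1) + t) (N + 1) i =
          seedY N (ℓ * (N + 1)) (N + 1) i + seedY N (ℓ * (N + 1)) 1 i +
            (if t = N then Sm N ℓ N i else 0)) := by
  intro t ht1
  induction t, ht1 using Nat.le_induction with
  | base =>
      intro _
      have hmod : (ℓ * (N + 1)) % (N + 1) = 0 := Nat.mul_mod_left _ _
      have hstep : ∀ j (i : Fin (N + 1)), seedY N (ℓ * (N + 1) + 1) j i
          = coefMut N 1 (b0 N) (seedY N (ℓ * (N + 1))) j i := by
        intro j i
        rw [seedY_succ, Bseq_eq N hN, hmod, Bt_zero]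
      have hy1 : ∀ i, seedY N (ℓ * (N + 1)) 1 i ≤ 0 := fun i => hY 1 le_rfl (by omega) i
      refine ⟨?_, ?_, ?_, ?_⟩
      · intro j hj1 hj2 i; omega
      · intro i
        rw [hstep, coefMut_self, Sm_one]
      · intro j hj1 hj2 i
        rcases eq_or_ne j 2 with h2 | h2
        · rw [h2]
          rw [hstep, coefMut_of_neg N 1 2 _ _ i (by omega)
            (by rw [b0_row N hN]; exact if_pos (Or.inl rfl)) (hy1 i), Sm_one, if_pos rfl]
        · rw [hstep, coefMut_of_zero N 1 j _ _ i (by omega)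
            (by rw [b0_row N hN]; exact if_neg (by omega)), if_neg (by omega), add_zero]
      · intro i
        rw [hstep, coefMut_of_neg N 1 (N + 1) _ _ i (by omega)
          (by rw [b0_row N hN]; exact if_pos (Or.inr rfl)) (hy1 i),
          if_neg (by omega), add_zero]
  | succ t ht ih =>
      intro htN1
      have htN : t ≤ N := by omega
      have htl : t < N := by omega
      obtain ⟨ih1, ih2, ih3, ih4⟩ := ih htN
      have hmod : (ℓ * (N + 1) + t) % (N + 1) = t := by
        rw [mul_comm ℓ (N + 1), Nat.mul_add_mod]
        exact Nat.mod_eq_of_lt (by omega)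
      have hstep : ∀ j (i : Fin (N + 1)), seedY N (ℓ * (N + 1) + (t + 1)) j i
          = coefMut N (t + 1) (Bt N t) (seedY N (ℓ * (N + 1) + t)) j i := by
        intro j i
        rw [show ℓ * (N + 1) + (t + 1) = (ℓ * (N + 1) + t) + 1 from rfl,
          seedY_succ, Bseq_eq N hN, hmod]
      have hrow : ∀ j, Bt N t (t + 1) j = if j = t ∨ j = t + 2 then -1 else 0 := by
        intro j
        rw [Bt_row N t hN (by omega) htN]
        split_ifs <;> omega
      have hkval : ∀ i, seedY N (ℓ * (N + 1) + t) (t + 1) i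
          = seedY N (ℓ * (N + 1)) (t + 1) i + Sm N ℓ t i := by
        intro i
        rw [ih3 (t + 1) (by omega) (by omega) i, if_pos rfl]
      have hkneg : ∀ i, seedY N (ℓ * (N + 1) + t) (t + 1) i ≤ 0 := by
        intro i
        rw [hkval i]
        have h1 := hY (t + 1) (by omega) (by omega) i
        have h2 : Sm N ℓ t i ≤ 0 := Sm_nonpos N ℓ t hY (by omega) i
        linarith
      refine ⟨?_, ?_, ?_, ?_⟩
      · intro j hj1 hj2 i
        rcases eq_or_ne j t with hjt | hjt
        · rw [hjt]
          rw [hstep, coefMut_of_neg N (t + 1) t _ _ i (by omega)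
            (by rw [hrow]; exact if_pos (Or.inl rfl)) (hkneg i), ih2 i, hkval i]
          ring
        · rw [hstep, coefMut_of_zero N (t + 1) j _ _ i (by omega)
            (by rw [hrow]; exact if_neg (by omega)), ih1 j hj1 (by omega) i]
      · intro i
        rw [hstep, coefMut_self, hkval i, Sm_succ]
        ring
      · intro j hj1 hj2 i
        rcases eq_or_ne j (t + 2) with hj2' | hj2'
        · rw [hj2']
          rw [hstep, coefMut_of_neg N (t + 1) (t + 2) _ _ i (by omega)
            (by rw [hrow]; exact if_pos (Or.inr rfl)) (hkneg i),
            ih3 (t + 2) (by omega) (by omega) i, if_neg (by omega), hkval i,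
            if_pos rfl, Sm_succ]
          ring
        · rw [hstep, coefMut_of_zero N (t + 1) j _ _ i (by omega)
            (by rw [hrow]; exact if_neg (by omega)),
            ih3 j (by omega) (by omega) i, if_neg (by omega), if_neg (by omega)]
      · intro i
        rcases eq_or_ne (t + 1) N with hN1 | hN1
        · subst hN1
          rw [hstep, coefMut_of_neg (t + 1) (t + 1) (t + 1 + 1) _ _ i (by omega)
            (by rw [hrow]; exact if_pos (Or.inr (by omega))) (hkneg i),
            ih4 i, if_neg (show ¬(t = t + 1) by omega), hkval i,
            if_pos (rfl : t + 1 = t + 1), Sm_succ]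
          ring
        · rw [hstep, coefMut_of_zero N (t + 1) (N + 1) _ _ i (by omega)
            (by rw [hrow]; exact if_neg (by omega)),
            ih4 i, if_neg (by omega), if_neg (by omega)]

/-! ### One full cycle -/

lemma cycle_rec (N : ℕ) (hN : 2 ≤ N) (ℓ : ℕ)
    (hY : ∀ j, 1 ≤ j → j ≤ N → ∀ i, seedY N (ℓ * (N + 1)) j i ≤ 0)
    (hC : ∀ i, seedY N (ℓ * (N + 1)) 1 i + seedY N (ℓ * (N + 1)) (N + 1) i ≤ 0) :
    (∀ i, seedY N ((ℓ + 1) * (N + 1)) 1 i =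
        seedY N (ℓ * (N + 1)) 2 i + (seedY N (ℓ * (N + 1)) (N + 1) i +
          seedY N (ℓ * (N + 1)) 1 i + Sm N ℓ N i)) ∧
    (∀ j, 2 ≤ j → j ≤ N - 1 → ∀ i, seedY N ((ℓ + 1) * (N + 1)) j i =
        seedY N (ℓ * (N + 1)) (j + 1) i) ∧
    (∀ i, seedY N ((ℓ + 1) * (N + 1)) N i =
        seedY N (ℓ * (N + 1)) 1 i + seedY N (ℓ * (N + 1)) (N + 1) i) ∧
    (∀ i, seedY N ((ℓ + 1) * (N + 1)) (N + 1) i =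
        -(seedY N (ℓ * (N + 1)) (N + 1) i + seedY N (ℓ * (N + 1)) 1 i + Sm N ℓ N i)) := by
  obtain ⟨s1, s2, s3, s4⟩ := cycle_states N hN ℓ hY N (by omega) le_rfl
  have hmod : (ℓ * (N + 1) + N) % (N + 1) = N := by
    rw [mul_comm ℓ (N + 1), Nat.mul_add_mod]
    exact Nat.mod_eq_of_lt (by omega)
  have hEq : (ℓ + 1) * (N + 1) = (ℓ * (N + 1) + N) + 1 := by ring
  have hstep : ∀ j (i : Fin (N + 1)), seedY N ((ℓ + 1) * (N + 1)) j i
      = coefMut N (N + 1) (Bt N N) (seedY N (ℓ * (N + 1) + N)) j i := by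
    intro j i
    rw [hEq, seedY_succ, Bseq_eq N hN, hmod]
  have hrow : ∀ j, Bt N N (N + 1) j = if j = 1 ∨ j = N then -1 else 0 := by
    intro j; rw [Bt_row N N hN (by omega) le_rfl]; split_ifs <;> omega
  have hk : ∀ i, seedY N (ℓ * (N + 1) + N) (N + 1) i
      = seedY N (ℓ * (N + 1)) (N + 1) i + seedY N (ℓ * (N + 1)) 1 i + Sm N ℓ N i := by
    intro i; rw [s4 i, if_pos rfl]
  have hkneg : ∀ i, seedY N (ℓ * (N + 1) + N) (N + 1) i ≤ 0 := by
    intro i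
    rw [hk i]
    have h1 := hC i
    have h2 : Sm N ℓ N i ≤ 0 := Sm_nonpos N ℓ N hY le_rfl i
    linarith
  refine ⟨?_, ?_, ?_, ?_⟩
  · intro i
    rw [hstep, coefMut_of_neg N (N + 1) 1 _ _ i (by omega)
      (by rw [hrow]; exact if_pos (Or.inl rfl)) (hkneg i),
      s1 1 le_rfl (by omega) i, hk i]
  · intro j hj2 hjN i
    rw [hstep, coefMut_of_zero N (N + 1) j _ _ i (by omega)
      (by rw [hrow]; exact if_neg (by omega)), s1 j (by omega) (by omega) i]
  · intro i
    rw [hstep, coefMut_of_neg N (N + 1) N _ _ i (by omega)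
      (by rw [hrow]; exact if_pos (Or.inr rfl)) (hkneg i), s2 i, hk i]
    ring
  · intro i
    rw [hstep, coefMut_self, hk i]

/-! ### The sign invariant -/

def Pinv (N ℓ : ℕ) : Prop :=
  (∀ j, 1 ≤ j → j ≤ N → ∀ i, seedY N (ℓ * (N + 1)) j i ≤ 0) ∧
  (∀ i, seedY N (ℓ * (N + 1)) 1 i + seedY N (ℓ * (N + 1)) (N + 1) i ≤ 0)

lemma Pinv_one (N : ℕ) (hN : 2 ≤ N) : Pinv N 1 := by
  constructor
  · intro j _ _ i
    rw [seedY_cycle_one N hN]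
    split_ifs <;> omega
  · intro i
    rw [seedY_cycle_one N hN, seedY_cycle_one N hN]
    split_ifs <;> omega

lemma Pinv_succ (N : ℕ) (hN : 2 ≤ N) (ℓ : ℕ) (h : Pinv N ℓ) : Pinv N (ℓ + 1) := by
  obtain ⟨hY, hC⟩ := h
  obtain ⟨r1, r2, r3, r4⟩ := cycle_rec N hN ℓ hY hC
  have hS : ∀ i, Sm N ℓ N i ≤ 0 := fun i => Sm_nonpos N ℓ N hY le_rfl i
  constructor
  · intro j hj1 hjN i
    rcases eq_or_ne j 1 with h1 | h1
    · rw [h1, r1 i]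
      have a1 := hY 2 (by omega) (by omega) i
      have a2 := hC i
      have a3 := hS i
      linarith
    · rcases eq_or_ne j N with h2 | h2
      · rw [h2, r3 i]
        have a2 := hC i
        linarith
      · rw [r2 j (by omega) (by omega) i]
        exact hY (j + 1) (by omega) (by omega) i
  · intro i
    rw [r1 i, r4 i]
    have a1 := hY 2 (by omega) (by omega) i
    linarith

lemma Pinv_all (N : ℕ) (hN : 2 ≤ N) : ∀ ℓ, 1 ≤ ℓ → Pinv N ℓ := by
  intro ℓ hl
  induction ℓ, hl using Nat.le_induction with
  | base => exact Pinv_one N hN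
  | succ ℓ _ ih => exact Pinv_succ N hN ℓ ih

/-! ### Sum bookkeeping -/

lemma peel2 (M : ℕ) (hM : 1 ≤ M) (g : ℕ → ℤ) :
    ∑ j ∈ Finset.Icc 1 M, g j = g 1 + ∑ j ∈ Finset.Icc 2 M, g j := by
  induction M, hM using Nat.le_induction with
  | base =>
      rw [Finset.Icc_self, Finset.sum_singleton,
        show Finset.Icc 2 1 = ∅ from Finset.Icc_eq_empty (by omega), Finset.sum_empty]
      ring
  | succ M hM ih =>
      rw [Finset.sum_Icc_succ_top (by omega : 1 ≤ M + 1),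
        Finset.sum_Icc_succ_top (by omega : 2 ≤ M + 1), ih]
      ring

lemma peel3 (M : ℕ) (hM : 2 ≤ M) (g : ℕ → ℤ) :
    ∑ j ∈ Finset.Icc 1 M, g j = g 1 + g 2 + ∑ j ∈ Finset.Icc 3 M, g j := by
  induction M, hM using Nat.le_induction with
  | base =>
      rw [show (2 : ℕ) = 1 + 1 from rfl, Finset.sum_Icc_succ_top (by omega : 1 ≤ 1 + 1),
        Finset.Icc_self, Finset.sum_singleton,
        show Finset.Icc 3 (1 + 1) = ∅ from Finset.Icc_eq_empty (by omega), Finset.sum_empty]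
      ring
  | succ M hM ih =>
      rw [Finset.sum_Icc_succ_top (by omega : 1 ≤ M + 1),
        Finset.sum_Icc_succ_top (by omega : 3 ≤ M + 1), ih]
      ring

theorem stmt3 (N : ℕ) (hN : 2 ≤ N) :
    ∀ ℓ : ℕ, 1 ≤ ℓ →
      seedY N ((ℓ + 1) * (N + 1)) 1 =
          2 • seedY N (ℓ * (N + 1)) 1 + 2 • seedY N (ℓ * (N + 1)) 2 +
            ∑ j ∈ Finset.Icc 3 (N + 1), seedY N (ℓ * (N + 1)) j ∧
      (∀ j, 2 ≤ j → j ≤ N - 1 →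
          seedY N ((ℓ + 1) * (N + 1)) j = seedY N (ℓ * (N + 1)) (j + 1)) ∧
      seedY N ((ℓ + 1) * (N + 1)) N =
          seedY N (ℓ * (N + 1)) 1 + seedY N (ℓ * (N + 1)) (N + 1) ∧
      seedY N ((ℓ + 1) * (N + 1)) (N + 1) =
          -(2 • seedY N (ℓ * (N + 1)) 1 +
            ∑ j ∈ Finset.Icc 2 (N + 1), seedY N (ℓ * (N + 1)) j) := by
  intro ℓ hl
  obtain ⟨hY, hC⟩ := Pinv_all N hN ℓ hl
  obtain ⟨r1, r2, r3, r4⟩ := cycle_rec N hN ℓ hY hC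
  have hSm : ∀ i, Sm N ℓ N i = ∑ j ∈ Finset.Icc 1 N, seedY N (ℓ * (N + 1)) j i :=
    fun i => rfl
  refine ⟨?_, ?_, ?_, ?_⟩
  · funext i
    have h1 := r1 i
    have hp : Sm N ℓ N i = seedY N (ℓ * (N + 1)) 1 i + seedY N (ℓ * (N + 1)) 2 i +
        ∑ j ∈ Finset.Icc 3 N, seedY N (ℓ * (N + 1)) j i := by
      rw [hSm i]; exact peel3 N hN _
    have hq : ∑ j ∈ Finset.Icc 3 (N + 1), seedY N (ℓ * (N + 1)) j i =
        (∑ j ∈ Finset.Icc 3 N, seedY N (ℓ * (N + 1)) j i) +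
          seedY N (ℓ * (N + 1)) (N + 1) i :=
      Finset.sum_Icc_succ_top (by omega) _
    simp only [Pi.add_apply, Pi.smul_apply, Finset.sum_apply, nsmul_eq_mul, Nat.cast_ofNat, Pi.mul_apply, Pi.ofNat_apply]
    rw [h1, hp, hq]
    ring
  · intro j hj1 hj2
    funext i
    exact r2 j hj1 hj2 i
  · funext i
    simp only [Pi.add_apply]
    exact r3 i
  · funext i
    have h4 := r4 i
    have hp : Sm N ℓ N i = seedY N (ℓ * (N + 1)) 1 i +
        ∑ j ∈ Finset.Icc 2 N, seedY N (ℓ * (N + 1)) j i := by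
      rw [hSm i]; exact peel2 N (by omega) _
    have hq : ∑ j ∈ Finset.Icc 2 (N + 1), seedY N (ℓ * (N + 1)) j i =
        (∑ j ∈ Finset.Icc 2 N, seedY N (ℓ * (N + 1)) j i) +
          seedY N (ℓ * (N + 1)) (N + 1) i :=
      Finset.sum_Icc_succ_top (by omega) _
    simp only [Pi.neg_apply, Pi.add_apply, Pi.smul_apply, Finset.sum_apply,
      nsmul_eq_mul, Nat.cast_ofNat, Pi.mul_apply, Pi.ofNat_apply]
    rw [h4, hp, hq]
    ring
end

section
/- For every ℓ ≥ 1 and j = 1,…,N, the monomials ν_j^ℓ satisfy ν_j^{ℓ+1} = ν_{j+1}^ℓ, where the subscript of ν is reduced modulo N (so ν_N^{ℓ+1} = ν_1^ℓ). Consequently every ν_j^ℓ is periodic in ℓ with period N: ν_j^{ℓ+N} = ν_j^ℓ. -/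
/-!
The recurrence moves the indices of `ν` one step around the cycle `1 → 2 → ⋯ → N → 1`;
for `ν_1` this is the cancellation `y_{N+1}^{ℓ+1} + y_1^{ℓ+1} = y_2^ℓ`. Going once around
the cycle takes `N` steps.
-/

/-- The monomials `ν_j^ℓ` (as exponent vectors): `ν_1^ℓ = y_{N+1}^ℓ + y_1^ℓ` and
`ν_j^ℓ = y_j^ℓ` for `j ≠ 1`. -/
def nuOf (N : ℕ) (y : ℕ → ℕ → Fin (N + 1) → ℤ) (ℓ j : ℕ) : Fin (N + 1) → ℤ :=
  if j = 1 then y ℓ (N + 1) + y ℓ 1 else y ℓ j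

section CyclicShift

variable {α : Type*} {N : ℕ} {ν : ℕ → ℕ → α}

theorem shift_add_of_shift
    (hshift : ∀ ℓ, 1 ≤ ℓ → ∀ j, 1 ≤ j → j ≤ N - 1 → ν (ℓ + 1) j = ν ℓ (j + 1))
    {ℓ : ℕ} (hℓ : 1 ≤ ℓ) (k : ℕ) :
    ∀ j, 1 ≤ j → j + k ≤ N → ν (ℓ + k) j = ν ℓ (j + k) := by
  induction k with
  | zero => intro j _ _; rfl
  | succ k ih =>
    intro j hj1 hjk
    calc ν (ℓ + k + 1) j = ν (ℓ + k) (j + 1) := hshift (ℓ + k) (by omega) j hj1 (by omega)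
      _ = ν ℓ (j + (k + 1)) := by rw [ih (j + 1) (by omega) (by omega), add_right_comm]; rfl

/-- Walk `ν_j` up to `ν_N` in `N - j` steps, wrap around to `ν_1`, then walk up to `ν_j`
in the remaining `j - 1` steps. -/
theorem periodic_of_cyclic_shift
    (hshift : ∀ ℓ, 1 ≤ ℓ → ∀ j, 1 ≤ j → j ≤ N - 1 → ν (ℓ + 1) j = ν ℓ (j + 1))
    (hwrap : ∀ ℓ, 1 ≤ ℓ → ν (ℓ + 1) N = ν ℓ 1)
    {ℓ j : ℕ} (hℓ : 1 ≤ ℓ) (hj1 : 1 ≤ j) (hjN : j ≤ N) : ν (ℓ + N) j = ν ℓ j :=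
  calc ν (ℓ + N) j = ν (ℓ + j + (N - j)) j := by rw [show ℓ + j + (N - j) = ℓ + N by omega]
    _ = ν (ℓ + (j - 1) + 1) N := by
      rw [shift_add_of_shift hshift (by omega) (N - j) j hj1 (by omega), Nat.add_sub_cancel' hjN,
        add_assoc, Nat.sub_add_cancel hj1]
    _ = ν (ℓ + (j - 1)) 1 := hwrap _ (by omega)
    _ = ν ℓ j := by
      rw [shift_add_of_shift hshift hℓ (j - 1) 1 le_rfl (by omega)]
      congr 1; omega

end CyclicShift

section Recurrence

variable {N : ℕ} {y : ℕ → ℕ → Fin (N + 1) → ℤ} {ℓ : ℕ}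

theorem nuOf_succ_one (hN : 1 ≤ N)
    (h1 : y (ℓ + 1) 1 = 2 • y ℓ 1 + 2 • y ℓ 2 + ∑ j ∈ Finset.Icc 3 (N + 1), y ℓ j)
    (hlast : y (ℓ + 1) (N + 1) = -(2 • y ℓ 1 + ∑ j ∈ Finset.Icc 2 (N + 1), y ℓ j)) :
    nuOf N y (ℓ + 1) 1 = nuOf N y ℓ 2 := by
  have hsplit : ∑ j ∈ Finset.Icc 2 (N + 1), y ℓ j
      = y ℓ 2 + ∑ j ∈ Finset.Icc 3 (N + 1), y ℓ j := by
    rw [← Finset.add_sum_Ioc_eq_sum_Icc (by omega), ← Finset.Icc_add_one_left_eq_Ioc]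
    rfl
  simp only [nuOf, if_pos, if_neg (by decide : (2 : ℕ) ≠ 1), hlast, h1, hsplit]
  abel

theorem nuOf_succ_of_two_le {j : ℕ} (h2j : 2 ≤ j) (hy : y (ℓ + 1) j = y ℓ (j + 1)) :
    nuOf N y (ℓ + 1) j = nuOf N y ℓ (j + 1) := by
  simp only [nuOf, if_neg (by omega : j ≠ 1), if_neg (by omega : j + 1 ≠ 1), hy]

theorem nuOf_succ_last (hN : 2 ≤ N) (hy : y (ℓ + 1) N = y ℓ 1 + y ℓ (N + 1)) :
    nuOf N y (ℓ + 1) N = nuOf N y ℓ 1 := by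
  simp only [nuOf, if_neg (by omega : N ≠ 1), if_pos, hy, add_comm]

end Recurrence

theorem stmt4 (N : ℕ) (hN : 2 ≤ N) (y : ℕ → ℕ → Fin (N + 1) → ℤ)
    (hr1 : ∀ ℓ, 1 ≤ ℓ → y (ℓ + 1) 1 =
        2 • y ℓ 1 + 2 • y ℓ 2 + ∑ j ∈ Finset.Icc 3 (N + 1), y ℓ j)
    (hr2 : ∀ ℓ, 1 ≤ ℓ → ∀ j, 2 ≤ j → j ≤ N - 1 → y (ℓ + 1) j = y ℓ (j + 1))
    (hr3 : ∀ ℓ, 1 ≤ ℓ → y (ℓ + 1) N = y ℓ 1 + y ℓ (N + 1))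
    (hr4 : ∀ ℓ, 1 ≤ ℓ → y (ℓ + 1) (N + 1) =
        -(2 • y ℓ 1 + ∑ j ∈ Finset.Icc 2 (N + 1), y ℓ j)) :
    ∀ ℓ, 1 ≤ ℓ →
      (∀ j, 1 ≤ j → j ≤ N - 1 → nuOf N y (ℓ + 1) j = nuOf N y ℓ (j + 1)) ∧
      nuOf N y (ℓ + 1) N = nuOf N y ℓ 1 ∧
      (∀ j, 1 ≤ j → j ≤ N → nuOf N y (ℓ + N) j = nuOf N y ℓ j) := by
  have hshift : ∀ ℓ, 1 ≤ ℓ → ∀ j, 1 ≤ j → j ≤ N - 1 →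
      nuOf N y (ℓ + 1) j = nuOf N y ℓ (j + 1) := by
    intro ℓ hℓ j hj1 hjN
    rcases hj1.eq_or_lt with rfl | hj2
    · exact nuOf_succ_one (by omega) (hr1 ℓ hℓ) (hr4 ℓ hℓ)
    · exact nuOf_succ_of_two_le hj2 (hr2 ℓ hℓ j hj2 hjN)
  have hwrap : ∀ ℓ, 1 ≤ ℓ → nuOf N y (ℓ + 1) N = nuOf N y ℓ 1 :=
    fun ℓ hℓ ↦ nuOf_succ_last hN (hr3 ℓ hℓ)
  exact fun ℓ hℓ ↦ ⟨hshift ℓ hℓ, hwrap ℓ hℓ,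
    fun _ hj1 hjN ↦ periodic_of_cyclic_shift hshift hwrap hℓ hj1 hjN⟩
end

section
/- For every n = 1,…,N, the tropical elementary symmetric polynomial e_n^ℓ := min over subsets I ⊆ {1,…,N} with |I| = n of Σ_{j∈I} ν_j^ℓ (componentwise minimum of the vector sums in ℤ^{N+1}) is a conserved quantity: e_n^ℓ = e_n^1 for all ℓ ≥ 1. Moreover, if the initial tuple is y_j^1 = −u_j for all j (u_j the j-th standard basis vector), then all these conserved quantities coincide: e_1^1 = e_2^1 = ⋯ = e_N^1 = −(1,1,…,1), the exponent vector of ∏_{j=1}^{N+1} (y_j)^{−1}. -/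
/-- The tropical elementary symmetric polynomial `e_n^ℓ`: the componentwise minimum,
over all subsets `I ⊆ {1, …, N}` with `|I| = n`, of `∑_{j ∈ I} ν_j^ℓ`. -/
def eSym (N : ℕ) (y : ℕ → ℕ → Fin (N + 1) → ℤ) (n ℓ : ℕ) : Fin (N + 1) → ℤ := fun i =>
  if h : ((Finset.Icc 1 N).powersetCard n).Nonempty then
    ((Finset.Icc 1 N).powersetCard n).inf' h (fun I => ∑ j ∈ I, nuOf N y ℓ j i)
  else 0

/-- The `j`-th standard basis vector `u_j` (coordinate `i : Fin (N+1)` encodes index `i+1`). -/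
def uvec (N j : ℕ) : Fin (N + 1) → ℤ := fun i => if (i : ℕ) + 1 = j then 1 else 0

/-- forward cyclic shift on `{1,…,N}` -/
def sigF (N j : ℕ) : ℕ := if j = N then 1 else j + 1

/-- backward cyclic shift on `{1,…,N}` -/
def sigB (N j : ℕ) : ℕ := if j = 1 then N else j - 1

lemma sigF_mem {N j : ℕ} (hN : 2 ≤ N) (hj : j ∈ Finset.Icc 1 N) :
    sigF N j ∈ Finset.Icc 1 N := by
  simp only [Finset.mem_Icc] at *; unfold sigF; split <;> omega

lemma sigB_mem {N j : ℕ} (hN : 2 ≤ N) (hj : j ∈ Finset.Icc 1 N) :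
    sigB N j ∈ Finset.Icc 1 N := by
  simp only [Finset.mem_Icc] at *; unfold sigB; split <;> omega

lemma sigB_sigF {N j : ℕ} (hj : j ∈ Finset.Icc 1 N) : sigB N (sigF N j) = j := by
  simp only [Finset.mem_Icc] at hj; unfold sigF sigB; split_ifs <;> omega

lemma sigF_sigB {N j : ℕ} (hj : j ∈ Finset.Icc 1 N) : sigF N (sigB N j) = j := by
  simp only [Finset.mem_Icc] at hj; unfold sigF sigB; split_ifs <;> omega

lemma nu_shift (N : ℕ) (hN : 2 ≤ N) (y : ℕ → ℕ → Fin (N + 1) → ℤ)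
    (hr1 : ∀ ℓ, 1 ≤ ℓ → y (ℓ + 1) 1 =
        2 • y ℓ 1 + 2 • y ℓ 2 + ∑ j ∈ Finset.Icc 3 (N + 1), y ℓ j)
    (hr2 : ∀ ℓ, 1 ≤ ℓ → ∀ j, 2 ≤ j → j ≤ N - 1 → y (ℓ + 1) j = y ℓ (j + 1))
    (hr3 : ∀ ℓ, 1 ≤ ℓ → y (ℓ + 1) N = y ℓ 1 + y ℓ (N + 1))
    (hr4 : ∀ ℓ, 1 ≤ ℓ → y (ℓ + 1) (N + 1) =
        -(2 • y ℓ 1 + ∑ j ∈ Finset.Icc 2 (N + 1), y ℓ j))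
    (ℓ : ℕ) (hℓ : 1 ≤ ℓ) (j : ℕ) (hj : j ∈ Finset.Icc 1 N) :
    nuOf N y (ℓ + 1) j = nuOf N y ℓ (sigF N j) := by
  simp only [Finset.mem_Icc] at hj
  rcases eq_or_ne j 1 with rfl | hj1
  · have hs : sigF N 1 = 2 := by unfold sigF; split <;> omega
    rw [hs]
    unfold nuOf
    rw [if_pos rfl, if_neg (by omega : (2:ℕ) ≠ 1)]
    rw [hr4 ℓ hℓ, hr1 ℓ hℓ]
    have h1 : Finset.Icc 3 (N + 1) = Finset.Ioc 2 (N + 1) := Finset.Icc_add_one_left_eq_Ioc 2 (N + 1)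
    have h2 : insert 2 (Finset.Ioc 2 (N + 1)) = Finset.Icc 2 (N + 1) :=
      Finset.Ioc_insert_left (by omega)
    have hsplit : ∑ k ∈ Finset.Icc 2 (N + 1), y ℓ k
        = y ℓ 2 + ∑ k ∈ Finset.Icc 3 (N + 1), y ℓ k := by
      rw [h1, ← h2, Finset.sum_insert (by simp)]
    rw [hsplit]
    abel
  · rcases eq_or_ne j N with hjN | hjN
    · have hs : sigF N j = 1 := by unfold sigF; rw [if_pos hjN]
      rw [hs]
      unfold nuOf
      rw [if_neg hj1, if_pos rfl, hjN, hr3 ℓ hℓ]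
      exact add_comm _ _
    · have hs : sigF N j = j + 1 := if_neg hjN
      rw [hs]
      unfold nuOf
      rw [if_neg hj1, if_neg (by omega), hr2 ℓ hℓ j (by omega) (by omega)]

lemma eSym_step (N : ℕ) (hN : 2 ≤ N) (y : ℕ → ℕ → Fin (N + 1) → ℤ)
    (hr1 : ∀ ℓ, 1 ≤ ℓ → y (ℓ + 1) 1 =
        2 • y ℓ 1 + 2 • y ℓ 2 + ∑ j ∈ Finset.Icc 3 (N + 1), y ℓ j)
    (hr2 : ∀ ℓ, 1 ≤ ℓ → ∀ j, 2 ≤ j → j ≤ N - 1 → y (ℓ + 1) j = y ℓ (j + 1))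
    (hr3 : ∀ ℓ, 1 ≤ ℓ → y (ℓ + 1) N = y ℓ 1 + y ℓ (N + 1))
    (hr4 : ∀ ℓ, 1 ≤ ℓ → y (ℓ + 1) (N + 1) =
        -(2 • y ℓ 1 + ∑ j ∈ Finset.Icc 2 (N + 1), y ℓ j))
    (n ℓ : ℕ) (hℓ : 1 ≤ ℓ) : eSym N y n (ℓ + 1) = eSym N y n ℓ := by
  funext i
  unfold eSym
  by_cases h : ((Finset.Icc 1 N).powersetCard n).Nonempty
  · rw [dif_pos h, dif_pos h]
    have hmemS : ∀ I ∈ (Finset.Icc 1 N).powersetCard n,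
        I ⊆ Finset.Icc 1 N ∧ I.card = n := by
      intro I hI; rwa [Finset.mem_powersetCard] at hI
    have himg : ∀ I ∈ (Finset.Icc 1 N).powersetCard n,
        I.image (sigF N) ∈ (Finset.Icc 1 N).powersetCard n ∧
        (∑ j ∈ I, nuOf N y (ℓ + 1) j i) = ∑ j ∈ I.image (sigF N), nuOf N y ℓ j i := by
      intro I hI
      obtain ⟨hsub, hcard⟩ := hmemS I hI
      have hinj : Set.InjOn (sigF N) I := by
        intro a ha b hb hab
        have h1 := sigB_sigF (hsub ha)
        rw [← h1, hab, sigB_sigF (hsub hb)]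
      refine ⟨?_, ?_⟩
      · rw [Finset.mem_powersetCard]
        refine ⟨fun x hx => ?_, by rw [Finset.card_image_of_injOn hinj, hcard]⟩
        obtain ⟨a, ha, rfl⟩ := Finset.mem_image.mp hx
        exact sigF_mem hN (hsub ha)
      · rw [Finset.sum_image (fun a ha b hb => hinj ha hb)]
        exact Finset.sum_congr rfl fun j hj => by
          rw [nu_shift N hN y hr1 hr2 hr3 hr4 ℓ hℓ j (hsub hj)]
  -- need congrFun here since nu_shift is about functions; handled below
    apply le_antisymm
    · apply Finset.le_inf'
      intro I hI
      obtain ⟨hsub, hcard⟩ := hmemS I hI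
      have hinjB : Set.InjOn (sigB N) I := by
        intro a ha b hb hab
        have h1 := sigF_sigB (hsub ha)
        rw [← h1, hab, sigF_sigB (hsub hb)]
      have hI' : I.image (sigB N) ∈ (Finset.Icc 1 N).powersetCard n := by
        rw [Finset.mem_powersetCard]
        refine ⟨fun x hx => ?_, by rw [Finset.card_image_of_injOn hinjB, hcard]⟩
        obtain ⟨a, ha, rfl⟩ := Finset.mem_image.mp hx
        exact sigB_mem hN (hsub ha)
      obtain ⟨_, hsum⟩ := himg _ hI'
      have himgid : (I.image (sigB N)).image (sigF N) = I := by
        rw [Finset.image_image]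
        have hid : ∀ x ∈ I, (sigF N ∘ sigB N) x = id x := fun x hx => sigF_sigB (hsub hx)
        rw [Finset.image_congr hid, Finset.image_id]
      calc ((Finset.Icc 1 N).powersetCard n).inf' h
            (fun I => ∑ j ∈ I, nuOf N y (ℓ + 1) j i)
          ≤ ∑ j ∈ I.image (sigB N), nuOf N y (ℓ + 1) j i := Finset.inf'_le _ hI'
        _ = ∑ j ∈ I, nuOf N y ℓ j i := by rw [hsum, himgid]
    · apply Finset.le_inf'
      intro I hI
      obtain ⟨hmem, hsum⟩ := himg I hI
      calc ((Finset.Icc 1 N).powersetCard n).inf' h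
            (fun I => ∑ j ∈ I, nuOf N y ℓ j i)
          ≤ ∑ j ∈ I.image (sigF N), nuOf N y ℓ j i := Finset.inf'_le _ hmem
        _ = ∑ j ∈ I, nuOf N y (ℓ + 1) j i := hsum.symm
  · rw [dif_neg h, dif_neg h]

theorem stmt5 (N : ℕ) (hN : 2 ≤ N) (y : ℕ → ℕ → Fin (N + 1) → ℤ)
    (hr1 : ∀ ℓ, 1 ≤ ℓ → y (ℓ + 1) 1 =
        2 • y ℓ 1 + 2 • y ℓ 2 + ∑ j ∈ Finset.Icc 3 (N + 1), y ℓ j)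
    (hr2 : ∀ ℓ, 1 ≤ ℓ → ∀ j, 2 ≤ j → j ≤ N - 1 → y (ℓ + 1) j = y ℓ (j + 1))
    (hr3 : ∀ ℓ, 1 ≤ ℓ → y (ℓ + 1) N = y ℓ 1 + y ℓ (N + 1))
    (hr4 : ∀ ℓ, 1 ≤ ℓ → y (ℓ + 1) (N + 1) =
        -(2 • y ℓ 1 + ∑ j ∈ Finset.Icc 2 (N + 1), y ℓ j)) :
    (∀ n, 1 ≤ n → n ≤ N → ∀ ℓ, 1 ≤ ℓ → eSym N y n ℓ = eSym N y n 1) ∧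
    ((∀ j, 1 ≤ j → j ≤ N + 1 → y 1 j = -uvec N j) →
      ∀ n, 1 ≤ n → n ≤ N → eSym N y n 1 = fun _ : Fin (N + 1) => (-1 : ℤ)) := by
  constructor
  · intro n _ _ ℓ hℓ
    induction ℓ, hℓ using Nat.le_induction with
    | base => rfl
    | succ ℓ hℓ ih => rw [eSym_step N hN y hr1 hr2 hr3 hr4 n ℓ hℓ, ih]
  · intro hinit n hn1 hnN
    funext i
    have hcard : (Finset.Icc 1 N).card = N := by
      rw [Nat.card_Icc]; omega
    have hne : ((Finset.Icc 1 N).powersetCard n).Nonempty :=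
      Finset.powersetCard_nonempty.mpr (by rw [hcard]; exact hnN)
    have hiN := i.isLt
    have hval : ∀ j ∈ Finset.Icc 1 N, nuOf N y 1 j i =
        if j = (if (i : ℕ) + 1 = N + 1 then 1 else (i : ℕ) + 1) then -1 else 0 := by
      intro j hj
      simp only [Finset.mem_Icc] at hj
      unfold nuOf
      rcases eq_or_ne j 1 with rfl | hj1
      · rw [if_pos rfl, hinit (N + 1) (by omega) le_rfl, hinit 1 (by omega) (by omega)]
        simp only [uvec, Pi.add_apply, Pi.neg_apply]
        split_ifs <;> omega
      · rw [if_neg hj1, hinit j (by omega) (by omega)]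
        simp only [uvec, Pi.neg_apply]
        split_ifs <;> omega
    have hsum : ∀ I ∈ (Finset.Icc 1 N).powersetCard n,
        (∑ j ∈ I, nuOf N y 1 j i) =
        if (if (i : ℕ) + 1 = N + 1 then 1 else (i : ℕ) + 1) ∈ I then -1 else 0 := by
      intro I hI
      rw [Finset.mem_powersetCard] at hI
      rw [Finset.sum_congr rfl (fun j hj => hval j (hI.1 hj))]
      exact Finset.sum_ite_eq' I _ (fun _ => (-1 : ℤ))
    show eSym N y n 1 i = -1
    rw [eSym, dif_pos hne]
    have hjst : (if (i : ℕ) + 1 = N + 1 then 1 else (i : ℕ) + 1) ∈ Finset.Icc 1 N := by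
      simp only [Finset.mem_Icc]; split <;> omega
    obtain ⟨u, hju, hu, hucard⟩ := Finset.exists_subsuperset_card_eq (n := n)
      (Finset.singleton_subset_iff.mpr hjst)
      (by rw [Finset.card_singleton]; exact hn1) (by rw [hcard]; exact hnN)
    have huS : u ∈ (Finset.Icc 1 N).powersetCard n :=
      Finset.mem_powersetCard.mpr ⟨hu, hucard⟩
    apply le_antisymm
    · calc ((Finset.Icc 1 N).powersetCard n).inf' hne
            (fun I => ∑ j ∈ I, nuOf N y 1 j i)
          ≤ ∑ j ∈ u, nuOf N y 1 j i := Finset.inf'_le _ huS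
        _ = -1 := by
          rw [hsum u huS, if_pos (hju (Finset.mem_singleton_self _))]
    · apply Finset.le_inf'
      intro I hI
      rw [hsum I hI]
      split <;> omega
end

section
/- Suppose the initial tuple is y_j^1 = −u_j for all j = 1,…,N+1. Then for every ℓ ≥ 1, writing ℓ = nN + s with n ≥ 0 and 1 ≤ s ≤ N, the solution of the recurrence is: y_1^ℓ = (n(N+1)+s−1)·C_N + C_s + u_{N+1}; y_j^ℓ = ν_{j+s−1} for 2 ≤ j ≤ N (the subscript of ν reduced modulo N into {1,…,N}); and y_{N+1}^ℓ = −((n(N+1)+s−1)·C_N + C_{s−1} + u_{N+1}). -/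
/-- The fixed exponent vectors `ν_m` (`m ≥ 1`), extended `N`-periodically:
`ν_1 = -u_1 - u_{N+1}` and `ν_j = -u_j` for `2 ≤ j ≤ N`. -/
def nuvec (N m : ℕ) : Fin (N + 1) → ℤ :=
  if (m - 1) % N + 1 = 1 then -uvec N 1 - uvec N (N + 1)
  else -uvec N ((m - 1) % N + 1)

/-- `C_m := ν_1 + ν_2 + ⋯ + ν_m`, with `C_0 = 0`. -/
def Cvec (N m : ℕ) : Fin (N + 1) → ℤ := ∑ j ∈ Finset.Icc 1 m, nuvec N j

/-!
By induction on `ℓ = k + 1` the solution is `y_1 = k C_N + C_{k+1} + u_{N+1}`,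
`y_j = ν_{j+k}` for `2 ≤ j ≤ N` and `y_{N+1} = -(k C_N + C_k + u_{N+1})`: the middle entries
just rotate through the `ν`'s, and their sum is a window of `N - 1` consecutive `ν`'s, which by
periodicity equals `C_N - ν_{k+1}`. The stated form follows from `C_{nN+s} = n C_N + C_s`.
-/

section ExponentVectors

variable (N : ℕ)

lemma nuvec_add_mul (m n : ℕ) (hm : 1 ≤ m) : nuvec N (m + n * N) = nuvec N m := by
  have h : (m + n * N - 1) % N = (m - 1) % N := by
    rw [show m + n * N - 1 = m - 1 + n * N by omega, Nat.add_mul_mod_self_right]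
  unfold nuvec
  rw [h]

lemma nuvec_add_period (m : ℕ) (hm : 1 ≤ m) : nuvec N (m + N) = nuvec N m := by
  simpa using nuvec_add_mul N m 1 hm

@[simp] lemma Cvec_zero : Cvec N 0 = 0 := by simp [Cvec]

lemma Cvec_succ (m : ℕ) : Cvec N (m + 1) = Cvec N m + nuvec N (m + 1) :=
  Finset.sum_Icc_succ_top (by omega) _

lemma Cvec_add_period (m : ℕ) : Cvec N (m + N) = Cvec N m + Cvec N N := by
  induction m with
  | zero => simp
  | succ m ih =>
    rw [show m + 1 + N = m + N + 1 by omega, Cvec_succ, ih, add_right_comm m N 1,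
      nuvec_add_period N _ (by omega), Cvec_succ]
    abel

lemma nuvec_one : nuvec N 1 = -uvec N 1 - uvec N (N + 1) := by simp [nuvec]

lemma nuvec_of_two_le_of_le (j : ℕ) (hj : 2 ≤ j) (hjN : j ≤ N) : nuvec N j = -uvec N j := by
  rw [nuvec, Nat.mod_eq_of_lt (by omega), Nat.sub_add_cancel (by omega), if_neg (by omega)]

lemma Cvec_mul_add (n s : ℕ) : Cvec N (n * N + s) = n • Cvec N N + Cvec N s := by
  induction n with
  | zero => simp
  | succ n ih =>
    rw [show (n + 1) * N + s = n * N + s + N by ring, Cvec_add_period, ih, succ_nsmul]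
    abel

lemma sum_Icc_nuvec_add (k a b : ℕ) (hab : a ≤ b) :
    ∑ j ∈ Finset.Icc (a + 1) b, nuvec N (j + k) = Cvec N (b + k) - Cvec N (a + k) := by
  induction b, hab using Nat.le_induction with
  | base => simp
  | succ b hab ih =>
    rw [Finset.sum_Icc_succ_top (by omega), ih, show b + 1 + k = b + k + 1 by omega, Cvec_succ]
    abel

end ExponentVectors

lemma sum_Icc_three_eq {M : Type*} [AddCommGroup M] (f : ℕ → M) {N : ℕ} (hN : 2 ≤ N) :
    ∑ j ∈ Finset.Icc 3 (N + 1), f j = ∑ j ∈ Finset.Icc 2 N, f j - f 2 + f (N + 1) := by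
  rw [Finset.sum_Icc_succ_top (by omega), ← Finset.add_sum_Ioc_eq_sum_Icc hN,
    ← Finset.Icc_add_one_left_eq_Ioc, add_sub_cancel_left]
  rfl

lemma closed_form_of_recurrence (N : ℕ) (hN : 2 ≤ N) (y : ℕ → ℕ → Fin (N + 1) → ℤ)
    (hr1 : ∀ ℓ, 1 ≤ ℓ → y (ℓ + 1) 1 =
        2 • y ℓ 1 + 2 • y ℓ 2 + ∑ j ∈ Finset.Icc 3 (N + 1), y ℓ j)
    (hr2 : ∀ ℓ, 1 ≤ ℓ → ∀ j, 2 ≤ j → j ≤ N - 1 → y (ℓ + 1) j = y ℓ (j + 1))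
    (hr3 : ∀ ℓ, 1 ≤ ℓ → y (ℓ + 1) N = y ℓ 1 + y ℓ (N + 1))
    (hr4 : ∀ ℓ, 1 ≤ ℓ → y (ℓ + 1) (N + 1) =
        -(2 • y ℓ 1 + ∑ j ∈ Finset.Icc 2 (N + 1), y ℓ j))
    (hinit : ∀ j, 1 ≤ j → j ≤ N + 1 → y 1 j = -uvec N j) (k : ℕ) :
    y (k + 1) 1 = k • Cvec N N + Cvec N (k + 1) + uvec N (N + 1) ∧
      (∀ j, 2 ≤ j → j ≤ N → y (k + 1) j = nuvec N (j + k)) ∧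
      y (k + 1) (N + 1) = -(k • Cvec N N + Cvec N k + uvec N (N + 1)) := by
  induction k with
  | zero =>
    refine ⟨?_, fun j hj hjN => ?_, ?_⟩
    · rw [hinit 1 le_rfl (by omega), zero_add, Cvec_succ, nuvec_one]
      simp
    · rw [hinit j (by omega) (by omega), add_zero, nuvec_of_two_le_of_le N j hj hjN]
    · rw [hinit (N + 1) (by omega) le_rfl]
      simp
  | succ k ih =>
    obtain ⟨h1, hmid, hlast⟩ := ih
    have hsum : ∑ j ∈ Finset.Icc 2 N, y (k + 1) j = Cvec N (N + k) - Cvec N (1 + k) :=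
      (Finset.sum_congr rfl fun j hj => by
        rw [Finset.mem_Icc] at hj
        exact hmid j hj.1 hj.2).trans (sum_Icc_nuvec_add N k 1 N (by omega))
    have hwindow : Cvec N (N + k) - Cvec N (1 + k) = Cvec N N - nuvec N (k + 1) := by
      rw [add_comm N k, Cvec_add_period, add_comm 1, Cvec_succ]
      abel
    rw [hwindow] at hsum
    refine ⟨?_, fun j hj hjN => ?_, ?_⟩
    · rw [hr1 _ (by omega), sum_Icc_three_eq _ hN, hsum, h1, hlast, hmid 2 le_rfl hN,
        Cvec_succ N (k + 1), Cvec_succ N k, add_comm 2 k]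
      module
    · rcases hjN.lt_or_eq with hjN | hjN
      · rw [hr2 _ (by omega) j hj (by omega), hmid (j + 1) (by omega) hjN, add_assoc, add_comm 1]
      · rw [hjN, hr3 _ (by omega), h1, hlast, add_comm N (k + 1),
          nuvec_add_period N _ (by omega), Cvec_succ]
        module
    · rw [hr4 _ (by omega), Finset.sum_Icc_succ_top (by omega), hsum, h1, hlast, Cvec_succ N k]
      module

theorem stmt6 (N : ℕ) (hN : 2 ≤ N) (y : ℕ → ℕ → Fin (N + 1) → ℤ)
    (hr1 : ∀ ℓ, 1 ≤ ℓ → y (ℓ + 1) 1 =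
        2 • y ℓ 1 + 2 • y ℓ 2 + ∑ j ∈ Finset.Icc 3 (N + 1), y ℓ j)
    (hr2 : ∀ ℓ, 1 ≤ ℓ → ∀ j, 2 ≤ j → j ≤ N - 1 → y (ℓ + 1) j = y ℓ (j + 1))
    (hr3 : ∀ ℓ, 1 ≤ ℓ → y (ℓ + 1) N = y ℓ 1 + y ℓ (N + 1))
    (hr4 : ∀ ℓ, 1 ≤ ℓ → y (ℓ + 1) (N + 1) =
        -(2 • y ℓ 1 + ∑ j ∈ Finset.Icc 2 (N + 1), y ℓ j))
    (hinit : ∀ j, 1 ≤ j → j ≤ N + 1 → y 1 j = -uvec N j) :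
    ∀ n s : ℕ, 1 ≤ s → s ≤ N →
      y (n * N + s) 1 = (n * (N + 1) + s - 1) • Cvec N N + Cvec N s + uvec N (N + 1) ∧
      (∀ j, 2 ≤ j → j ≤ N → y (n * N + s) j = nuvec N (j + s - 1)) ∧
      y (n * N + s) (N + 1) =
        -((n * (N + 1) + s - 1) • Cvec N N + Cvec N (s - 1) + uvec N (N + 1)) := by
  intro n s hs hsN
  obtain ⟨h1, hmid, hlast⟩ :=
    closed_form_of_recurrence N hN y hr1 hr2 hr3 hr4 hinit (n * N + (s - 1))
  rw [show n * N + (s - 1) + 1 = n * N + s by omega] at h1 hmid hlast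
  have hcoeff : n * (N + 1) + s - 1 = n * N + (s - 1) + n := by rw [mul_add]; omega
  refine ⟨?_, fun j hj hjN => ?_, ?_⟩
  · rw [h1, Cvec_mul_add, hcoeff]
    module
  · rw [hmid j hj hjN, show j + (n * N + (s - 1)) = j + s - 1 + n * N by omega,
      nuvec_add_mul N _ n (by omega)]
  · rw [hlast, Cvec_mul_add, hcoeff]
    module
end

section
/- Suppose z_i^t ∈ K (1 ≤ i ≤ N+1, t ≥ 1) are nonzero and satisfy z_i^{t+1} z_i^t = z_{i−1}^{t+1} z_{i+1}^t + 1 with the conventions z_0^{t+1} = z_{N+1}^t and z_{N+2}^t = z_1^{t+1}. Suppose α_1,…,α_{N+1} ∈ K are nonzero with α_{i+1} = α_{i−1} y_i^{−1} for 2 ≤ i ≤ N, α_2 α_{N+1} = y_1^{−1}, and α_1 α_N = y_{N+1}. Define x_i^1 := α_i^{−1} z_i^1 and recursively x_i^{t+1} := z_i^{t+1} z_i^t / (c_i^t x_i^t) for all i and t ≥ 1. Then for all t ≥ 1 and i = 1,…,N+1 (with the conventions x_0^{t+1} = x_{N+1}^t and x_{N+2}^t = x_1^{t+1}): z_{i−1}^{t+1}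 z_{i+1}^t = c_i^t x_{i−1}^{t+1} x_{i+1}^t, and the exchange relation c_i^t x_i^{t+1} x_i^t = c_i^t x_{i−1}^{t+1} x_{i+1}^t + 1 holds. -/
/-- `ν_m ∈ K` (`m ≥ 1`), extended `N`-periodically: `ν_1 = (y_1 y_{N+1})⁻¹` and
`ν_j = y_j⁻¹` for `2 ≤ j ≤ N`. -/
def nuK {K : Type*} [Field K] (N : ℕ) (y : ℕ → K) (m : ℕ) : K :=
  if (m - 1) % N + 1 = 1 then (y 1 * y (N + 1))⁻¹
  else (y ((m - 1) % N + 1))⁻¹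

/-- `C_m := ν_1 ν_2 ⋯ ν_m`, with `C_0 = 1`. -/
def CK {K : Type*} [Field K] (N : ℕ) (y : ℕ → K) (m : ℕ) : K :=
  ∏ j ∈ Finset.Icc 1 m, nuK N y j

/-- `c_i^t := (C_N)^{n(N+1)+s-1} C_{s+i-1} y_{N+1}` where `t = nN + s`, `1 ≤ s ≤ N`. -/
def cK {K : Type*} [Field K] (N : ℕ) (y : ℕ → K) (i t : ℕ) : K :=
  CK N y N ^ ((t - 1) / N * (N + 1) + (t - 1) % N) * CK N y ((t - 1) % N + i) * y (N + 1)

/-- The boundary conventions: `f_0^{t+1} = f_{N+1}^t` and `f_{N+2}^t = f_1^{t+1}`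
(`ext N f i t` is `f_i^t` with these conventions; it is only used at `(0, t+1)` and
`(N+2, t)`). -/
def ext {K : Type*} (N : ℕ) (f : ℕ → ℕ → K) (i t : ℕ) : K :=
  if i = 0 then f (N + 1) (t - 1) else if i = N + 2 then f 1 (t + 1) else f i t

/-- The variables `x_i^t`: `x_i^1 := α_i⁻¹ z_i^1` and
`x_i^{t+1} := z_i^{t+1} z_i^t / (c_i^t x_i^t)`. -/
def xK {K : Type*} [Field K] (N : ℕ) (y α : ℕ → K) (z : ℕ → ℕ → K) (i : ℕ) : ℕ → K
  | 0 => 0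
  | 1 => (α i)⁻¹ * z i 1
  | t + 2 => z i (t + 2) * z i (t + 1) / (cK N y i (t + 1) * xK N y α z i (t + 1))

section aux
variable {K : Type*} [Field K] (N : ℕ) (y : ℕ → K)

lemma nuK_per (m : ℕ) (hm : 1 ≤ m) : nuK N y (N + m) = nuK N y m := by
  obtain ⟨k, rfl⟩ : ∃ k, m = k + 1 := ⟨m - 1, by omega⟩
  unfold nuK
  have h : (N + (k + 1) - 1) % N = (k + 1 - 1) % N := by
    have : N + (k + 1) - 1 = k + N := by omega
    simp [this, Nat.add_mod_right]
  rw [h]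

lemma CK_succ (m : ℕ) : CK N y (m + 1) = CK N y m * nuK N y (m + 1) := by
  unfold CK
  rw [Finset.prod_Icc_succ_top (by omega)]

lemma CK_split (m : ℕ) : CK N y (N + m) = CK N y N * CK N y m := by
  induction m with
  | zero => simp [CK]
  | succ k ih =>
      have : N + (k + 1) = (N + k) + 1 := by omega
      rw [this, CK_succ, ih]
      have h2 : N + k + 1 = N + (k + 1) := by omega
      rw [h2, nuK_per N y (k+1) (by omega), CK_succ]
      ring

variable (hN : 2 ≤ N) (hy : ∀ j, 1 ≤ j → j ≤ N + 1 → y j ≠ 0)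
include hN hy

lemma nuK_ne (m : ℕ) : nuK N y m ≠ 0 := by
  unfold nuK
  have h1 : (m - 1) % N < N := Nat.mod_lt _ (by omega)
  split
  · exact inv_ne_zero (mul_ne_zero (hy 1 (by omega) (by omega)) (hy (N+1) (by omega) le_rfl))
  · exact inv_ne_zero (hy _ (by omega) (by omega))

lemma CK_ne (m : ℕ) : CK N y m ≠ 0 :=
  Finset.prod_ne_zero_iff.mpr fun j _ => nuK_ne N y hN hy j

lemma cK_ne (i t : ℕ) : cK N y i t ≠ 0 :=
  mul_ne_zero (mul_ne_zero (pow_ne_zero _ (CK_ne N y hN hy N)) (CK_ne N y hN hy _))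
    (hy (N+1) (by omega) le_rfl)

end aux

section ids
variable {K : Type*} [Field K] (N : ℕ) (y : ℕ → K)

lemma cK_shift (i t : ℕ) :
    cK N y (i + 1) t = cK N y i t * nuK N y ((t - 1) % N + i + 1) := by
  unfold cK
  have : (t - 1) % N + (i + 1) = ((t - 1) % N + i) + 1 := by omega
  rw [this, CK_succ]
  ring

lemma cK_wrap (hN : 1 ≤ N) (t : ℕ) :
    cK N y (N + 1) t = cK N y 1 t * CK N y N := by
  unfold cK
  have : (t - 1) % N + (N + 1) = N + ((t - 1) % N + 1) := by omega
  rw [this, CK_split]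
  ring

lemma cK_step (hN : 2 ≤ N) (t i : ℕ) (ht : 1 ≤ t) (hi : 1 ≤ i) :
    cK N y i (t + 1) = cK N y i t * CK N y N * nuK N y ((t - 1) % N + i + 1) := by
  obtain ⟨u, rfl⟩ : ∃ u, t = u + 1 := ⟨t - 1, by omega⟩
  obtain ⟨j, rfl⟩ : ∃ j, i = j + 1 := ⟨i - 1, by omega⟩
  unfold cK
  simp only [Nat.add_sub_cancel]
  have hd := Nat.div_add_mod u N
  set r := u % N with hr
  set q := u / N with hq
  have hrN : r < N := Nat.mod_lt _ (by omega)
  by_cases h : r + 1 < N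
  · have h1 : (u + 1) % N = r + 1 := by
      have e : u + 1 = (r + 1) + N * q := by omega
      rw [e, Nat.add_mul_mod_self_left, Nat.mod_eq_of_lt h]
    have h2 : (u + 1) / N = q := by
      have e : u + 1 = N * q + (r + 1) := by omega
      rw [e, Nat.mul_add_div (by omega), Nat.div_eq_of_lt h]
      omega
    rw [h1, h2]
    have e1 : r + 1 + (j + 1) = (r + (j + 1)) + 1 := by omega
    rw [e1, CK_succ]
    have e2 : r + (j + 1) + 1 = r + j + 1 + 1 := by omega
    rw [e2]
    ring
  · have hrN1 : r + 1 = N := by omega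
    have h1 : (u + 1) % N = 0 := by
      have e : u + 1 = N * (q + 1) := by
        have : N * (q + 1) = N * q + N := by ring
        omega
      simp [e]
    have h2 : (u + 1) / N = q + 1 := by
      have e : u + 1 = N * (q + 1) := by
        have : N * (q + 1) = N * q + N := by ring
        omega
      simp [e, Nat.mul_div_cancel_left _ (show 0 < N by omega)]
    rw [h1, h2]
    have e2 : r + (j + 1) + 1 = N + (j + 1) := by omega
    rw [e2, nuK_per N y (j + 1) (by omega)]
    have e1 : r + (j + 1) = N + j := by omega
    rw [e1, CK_split]
    have e3 : (0 : ℕ) + (j + 1) = j + 1 := by omega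
    rw [e3, CK_succ]
    have e4 : (q + 1) * (N + 1) = q * (N + 1) + (N + 1) := by ring
    rw [e4, show q * (N + 1) + (N + 1) + 0 = (q * (N + 1) + r) + 2 by omega]
    rw [pow_add]
    ring

lemma cK_id1 (hN : 2 ≤ N) (t i : ℕ) (ht : 1 ≤ t) (h2 : 2 ≤ i) (hiN : i ≤ N) :
    cK N y i (t + 1) * cK N y i t = cK N y (i - 1) (t + 1) * cK N y (i + 1) t := by
  obtain ⟨j, rfl⟩ : ∃ j, i = j + 1 := ⟨i - 1, by omega⟩
  simp only [Nat.add_sub_cancel]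
  rw [cK_step N y hN t (j + 1) ht (by omega), cK_step N y hN t j ht (by omega),
      cK_shift N y (j + 1) t, cK_shift N y j t]
  ring

lemma cK_id2 (hN : 2 ≤ N) (t : ℕ) (ht : 1 ≤ t) :
    cK N y 1 (t + 1) * cK N y 1 t = cK N y (N + 1) t * cK N y 2 t := by
  rw [show (2 : ℕ) = 1 + 1 by norm_num, cK_step N y hN t 1 ht (by omega),
      cK_wrap N y (by omega) t, cK_shift N y 1 t]
  ring

lemma cK_id3 (hN : 2 ≤ N) (t : ℕ) (ht : 1 ≤ t) :
    cK N y (N + 1) (t + 1) * cK N y (N + 1) t = cK N y N (t + 1) * cK N y 1 (t + 1) := by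
  rw [cK_wrap N y (by omega) (t + 1), cK_shift N y N t, cK_step N y hN t N ht (by omega)]
  ring

lemma CK_zero : CK N y 0 = 1 := by simp [CK]

lemma cK_one (i : ℕ) : cK N y i 1 = CK N y i * y (N + 1) := by
  unfold cK
  simp

lemma nuK_one : nuK N y 1 = (y 1 * y (N + 1))⁻¹ := by
  unfold nuK
  simp

lemma nuK_mid (hN : 2 ≤ N) (i : ℕ) (h2 : 2 ≤ i) (hiN : i ≤ N) : nuK N y i = (y i)⁻¹ := by
  unfold nuK
  have h1 : (i - 1) % N = i - 1 := Nat.mod_eq_of_lt (by omega)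
  rw [h1, if_neg (by omega), show i - 1 + 1 = i by omega]

lemma cK_one_one (hyN : y (N + 1) ≠ 0) : cK N y 1 1 = (y 1)⁻¹ := by
  rw [cK_one, show (1 : ℕ) = 0 + 1 by norm_num, CK_succ, CK_zero, nuK_one, one_mul,
      mul_inv, mul_assoc, inv_mul_cancel₀ hyN, mul_one]

end ids

section xlem
variable {K : Type*} [Field K] (N : ℕ) (y α : ℕ → K) (z : ℕ → ℕ → K)

lemma ext_mid (f : ℕ → ℕ → K) (i t : ℕ) (h0 : i ≠ 0) (h2 : i ≠ N + 2) :
    ext N f i t = f i t := by simp [ext, h0, h2]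

lemma ext_zero (f : ℕ → ℕ → K) (t : ℕ) : ext N f 0 t = f (N + 1) (t - 1) := by simp [ext]

lemma ext_top (f : ℕ → ℕ → K) (t : ℕ) : ext N f (N + 2) t = f 1 (t + 1) := by
  rw [ext, if_neg (by omega), if_pos rfl]

lemma xK_one (i : ℕ) : xK N y α z i 1 = (α i)⁻¹ * z i 1 := rfl

lemma xK_succ (i t : ℕ) (ht : 1 ≤ t) :
    xK N y α z i (t + 1) =
      z i (t + 1) * z i t / (cK N y i t * xK N y α z i t) := by
  obtain ⟨u, rfl⟩ : ∃ u, t = u + 1 := ⟨t - 1, by omega⟩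
  rfl

lemma xK_ne (hN : 2 ≤ N) (hy : ∀ j, 1 ≤ j → j ≤ N + 1 → y j ≠ 0)
    (hα : ∀ i, 1 ≤ i → i ≤ N + 1 → α i ≠ 0)
    (hz : ∀ i t, 1 ≤ i → i ≤ N + 1 → 1 ≤ t → z i t ≠ 0) :
    ∀ t, 1 ≤ t → ∀ i, 1 ≤ i → i ≤ N + 1 → xK N y α z i t ≠ 0 := by
  intro t ht
  induction t, ht using Nat.le_induction with
  | base =>
      intro i h1 h2
      rw [xK_one]
      exact mul_ne_zero (inv_ne_zero (hα i h1 h2)) (hz i 1 h1 h2 le_rfl)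
  | succ t ht ih =>
      intro i h1 h2
      rw [xK_succ N y α z i t ht]
      exact div_ne_zero
        (mul_ne_zero (hz i (t + 1) h1 h2 (by omega)) (hz i t h1 h2 ht))
        (mul_ne_zero (cK_ne N y hN hy i t) (ih i h1 h2))

lemma xK_mul (hN : 2 ≤ N) (hy : ∀ j, 1 ≤ j → j ≤ N + 1 → y j ≠ 0)
    (hα : ∀ i, 1 ≤ i → i ≤ N + 1 → α i ≠ 0)
    (hz : ∀ i t, 1 ≤ i → i ≤ N + 1 → 1 ≤ t → z i t ≠ 0)
    (i t : ℕ) (ht : 1 ≤ t) (h1 : 1 ≤ i) (h2 : i ≤ N + 1) :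
    cK N y i t * xK N y α z i (t + 1) * xK N y α z i t = z i (t + 1) * z i t := by
  rw [xK_succ N y α z i t ht]
  have hc := cK_ne N y hN hy i t
  have hx := xK_ne N y α z hN hy hα hz t ht i h1 h2
  field_simp

end xlem

section key
variable {K : Type*} [Field K]

lemma key_alg {cA xA cB xB c c0 xA' xB' zA zB zA' zB' : K}
    (hA : cA * xA' * xA = zA' * zA) (hB : cB * xB' * xB = zB' * zB)
    (hR : zA * zB = c0 * xA * xB) (hc : c * c0 = cA * cB)
    (h1 : cA * xA ≠ 0) (h2 : cB * xB ≠ 0) :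
    zA' * zB' = c * xA' * xB' := by
  apply mul_right_cancel₀ (mul_ne_zero h1 h2)
  linear_combination (-(c * cB * xB' * xB)) * hA - (c * zA' * zA) * hB -
    (c * zA' * zB') * hR - (xA * xB * zA' * zB') * hc

lemma key_base {cA c a b xA xB xA' zA zB zA' : K}
    (hA : cA * xA' * xA = zA' * zA) (ha : a * xA = zA) (hb : b * xB = zB)
    (hc : c * a = cA * b) (h1 : cA * xA ≠ 0) (h2 : a ≠ 0) (h3 : b ≠ 0) :
    zA' * zB = c * xA' * xB := by
  apply mul_right_cancel₀ (mul_ne_zero (mul_ne_zero h1 h2) h3)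
  linear_combination (cA * b * zA' * zB) * ha - (c * a * zB) * hA -
    (c * xA' * cA * xA * a) * hb - (zA' * zB * zA) * hc

end key

section main
variable {K : Type*} [Field K] (N : ℕ) (y α : ℕ → K) (z : ℕ → ℕ → K)

lemma main_A (hN : 2 ≤ N) (hy : ∀ j, 1 ≤ j → j ≤ N + 1 → y j ≠ 0)
    (hα : ∀ i, 1 ≤ i → i ≤ N + 1 → α i ≠ 0)
    (hz : ∀ i t, 1 ≤ i → i ≤ N + 1 → 1 ≤ t → z i t ≠ 0)
    (hα1 : ∀ i, 2 ≤ i → i ≤ N → α (i + 1) = α (i - 1) * (y i)⁻¹)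
    (hα2 : α 2 * α (N + 1) = (y 1)⁻¹)
    (hα3 : α 1 * α N = y (N + 1)) :
    ∀ t, 1 ≤ t → ∀ i, 1 ≤ i → i ≤ N + 1 →
      ext N z (i - 1) (t + 1) * ext N z (i + 1) t =
        cK N y i t * ext N (fun a b => xK N y α z a b) (i - 1) (t + 1) *
          ext N (fun a b => xK N y α z a b) (i + 1) t := by
  intro t ht
  induction t, ht using Nat.le_induction with
  | base =>
    intro i h1 h2
    by_cases hi1 : i = 1
    · subst hi1
      norm_num
      rw [ext_zero, ext_zero, ext_mid N z 2 1 (by omega) (by omega),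
        ext_mid N _ 2 1 (by omega) (by omega)]
      norm_num
      rw [xK_one, xK_one, cK_one_one N y (hy (N + 1) (by omega) le_rfl)]
      have hA2 := hα 2 (by omega) (by omega)
      have hAN1 := hα (N + 1) (by omega) le_rfl
      have hy1 := hy 1 (by omega) (by omega)
      field_simp
      linear_combination (z (N + 1) 1 * z 2 1 * y 1) * hα2 + (z (N + 1) 1 * z 2 1) * mul_inv_cancel₀ hy1
    · by_cases hiN : i = N + 1
      · subst hiN
        simp only [show N + 1 - 1 = N from rfl, show N + 1 + 1 = N + 2 from rfl]
        rw [ext_top, ext_top, ext_mid N z N 2 (by omega) (by omega),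
          ext_mid N _ N 2 (by omega) (by omega)]
        have hA := xK_mul N y α z hN hy hα hz N 1 le_rfl (by omega) (by omega)
        have hB := xK_mul N y α z hN hy hα hz 1 1 le_rfl (by omega) (by omega)
        have hA1 := hα 1 (by omega) (by omega)
        have hAN := hα N (by omega) (by omega)
        have hR : z N 1 * z 1 1 = (α 1 * α N) * xK N y α z N 1 * xK N y α z 1 1 := by
          rw [xK_one, xK_one]
          field_simp
        have hc : cK N y (N + 1) 1 * (α 1 * α N) = cK N y N 1 * cK N y 1 1 := by
          rw [cK_wrap N y (by omega) 1, cK_one_one N y (hy (N + 1) (by omega) le_rfl),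
            cK_one, hα3]
          ring
        have h1 : cK N y N 1 * xK N y α z N 1 ≠ 0 :=
          mul_ne_zero (cK_ne N y hN hy N 1)
            (xK_ne N y α z hN hy hα hz 1 le_rfl N (by omega) (by omega))
        have h2 : cK N y 1 1 * xK N y α z 1 1 ≠ 0 :=
          mul_ne_zero (cK_ne N y hN hy 1 1)
            (xK_ne N y α z hN hy hα hz 1 le_rfl 1 (by omega) (by omega))
        exact key_alg hA hB hR hc h1 h2
      · -- base interior 2 ≤ i ≤ N
        rw [ext_mid N z (i - 1) 2 (by omega) (by omega),
          ext_mid N z (i + 1) 1 (by omega) (by omega),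
          ext_mid N _ (i - 1) 2 (by omega) (by omega),
          ext_mid N _ (i + 1) 1 (by omega) (by omega)]
        have hA := xK_mul N y α z hN hy hα hz (i - 1) 1 le_rfl (by omega) (by omega)
        have ha : α (i - 1) * xK N y α z (i - 1) 1 = z (i - 1) 1 := by
          rw [xK_one, ← mul_assoc, mul_inv_cancel₀ (hα (i - 1) (by omega) (by omega)),
            one_mul]
        have hb : α (i + 1) * xK N y α z (i + 1) 1 = z (i + 1) 1 := by
          rw [xK_one, ← mul_assoc, mul_inv_cancel₀ (hα (i + 1) (by omega) (by omega)),
            one_mul]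
        have hs := cK_shift N y (i - 1) 1
        simp only [show (1 : ℕ) - 1 = 0 from rfl, Nat.zero_mod, Nat.zero_add] at hs
        rw [show i - 1 + 1 = i by omega] at hs
        rw [nuK_mid N y hN i (by omega) (by omega)] at hs
        have hc : cK N y i 1 * α (i - 1) = cK N y (i - 1) 1 * α (i + 1) := by
          rw [hs, hα1 i (by omega) (by omega)]
          ring
        have h1 : cK N y (i - 1) 1 * xK N y α z (i - 1) 1 ≠ 0 :=
          mul_ne_zero (cK_ne N y hN hy (i - 1) 1)
            (xK_ne N y α z hN hy hα hz 1 le_rfl (i - 1) (by omega) (by omega))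
        exact key_base hA ha hb hc h1 (hα (i - 1) (by omega) (by omega))
          (hα (i + 1) (by omega) (by omega))
  | succ t ht ih =>
    intro i h1 h2
    by_cases hi1 : i = 1
    · subst hi1
      simp only [show (1 : ℕ) - 1 = 0 from rfl, show (1 : ℕ) + 1 = 2 from rfl]
      rw [ext_zero, ext_zero, ext_mid N z 2 (t + 1) (by omega) (by omega),
        ext_mid N _ 2 (t + 1) (by omega) (by omega)]
      simp only [Nat.add_sub_cancel]
      have hR := ih 1 le_rfl (by omega)
      simp only [show (1 : ℕ) - 1 = 0 from rfl, show (1 : ℕ) + 1 = 2 from rfl] at hR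
      rw [ext_zero, ext_zero, ext_mid N z 2 t (by omega) (by omega),
        ext_mid N _ 2 t (by omega) (by omega)] at hR
      simp only [Nat.add_sub_cancel] at hR
      have hA := xK_mul N y α z hN hy hα hz (N + 1) t ht (by omega) le_rfl
      have hB := xK_mul N y α z hN hy hα hz 2 t ht (by omega) (by omega)
      have hc := cK_id2 N y hN t ht
      have h1 : cK N y (N + 1) t * xK N y α z (N + 1) t ≠ 0 :=
        mul_ne_zero (cK_ne N y hN hy (N + 1) t)
          (xK_ne N y α z hN hy hα hz t ht (N + 1) (by omega) le_rfl)
      have h2 : cK N y 2 t * xK N y α z 2 t ≠ 0 :=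
        mul_ne_zero (cK_ne N y hN hy 2 t)
          (xK_ne N y α z hN hy hα hz t ht 2 (by omega) (by omega))
      exact key_alg hA hB hR hc h1 h2
    · by_cases hiN : i = N + 1
      · subst hiN
        simp only [show N + 1 - 1 = N from rfl, show N + 1 + 1 = N + 2 from rfl]
        rw [ext_top, ext_top, ext_mid N z N (t + 1 + 1) (by omega) (by omega),
          ext_mid N _ N (t + 1 + 1) (by omega) (by omega)]
        have hR := ih (N + 1) (by omega) le_rfl
        simp only [show N + 1 - 1 = N from rfl, show N + 1 + 1 = N + 2 from rfl] at hR
        rw [ext_top, ext_top, ext_mid N z N (t + 1) (by omega) (by omega),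
          ext_mid N _ N (t + 1) (by omega) (by omega)] at hR
        have hA := xK_mul N y α z hN hy hα hz N (t + 1) (by omega) (by omega) (by omega)
        have hB := xK_mul N y α z hN hy hα hz 1 (t + 1) (by omega) (by omega) (by omega)
        have hc := cK_id3 N y hN t ht
        have h1 : cK N y N (t + 1) * xK N y α z N (t + 1) ≠ 0 :=
          mul_ne_zero (cK_ne N y hN hy N (t + 1))
            (xK_ne N y α z hN hy hα hz (t + 1) (by omega) N (by omega) (by omega))
        have h2 : cK N y 1 (t + 1) * xK N y α z 1 (t + 1) ≠ 0 :=
          mul_ne_zero (cK_ne N y hN hy 1 (t + 1))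
            (xK_ne N y α z hN hy hα hz (t + 1) (by omega) 1 (by omega) (by omega))
        exact key_alg hA hB hR hc h1 h2
      · rw [ext_mid N z (i - 1) (t + 1 + 1) (by omega) (by omega),
          ext_mid N z (i + 1) (t + 1) (by omega) (by omega),
          ext_mid N _ (i - 1) (t + 1 + 1) (by omega) (by omega),
          ext_mid N _ (i + 1) (t + 1) (by omega) (by omega)]
        have hR := ih i h1 h2
        rw [ext_mid N z (i - 1) (t + 1) (by omega) (by omega),
          ext_mid N z (i + 1) t (by omega) (by omega),
          ext_mid N _ (i - 1) (t + 1) (by omega) (by omega),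
          ext_mid N _ (i + 1) t (by omega) (by omega)] at hR
        have hA := xK_mul N y α z hN hy hα hz (i - 1) (t + 1) (by omega) (by omega)
          (by omega)
        have hB := xK_mul N y α z hN hy hα hz (i + 1) t ht (by omega) (by omega)
        have hc := cK_id1 N y hN t i ht (by omega) (by omega)
        have hn1 : cK N y (i - 1) (t + 1) * xK N y α z (i - 1) (t + 1) ≠ 0 :=
          mul_ne_zero (cK_ne N y hN hy (i - 1) (t + 1))
            (xK_ne N y α z hN hy hα hz (t + 1) (by omega) (i - 1) (by omega) (by omega))
        have hn2 : cK N y (i + 1) t * xK N y α z (i + 1) t ≠ 0 :=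
          mul_ne_zero (cK_ne N y hN hy (i + 1) t)
            (xK_ne N y α z hN hy hα hz t ht (i + 1) (by omega) (by omega))
        exact key_alg hA hB hR hc hn1 hn2

end main

theorem stmt8 {K : Type*} [Field K] (N : ℕ) (hN : 2 ≤ N) (y α : ℕ → K) (z : ℕ → ℕ → K)
    (hy : ∀ j, 1 ≤ j → j ≤ N + 1 → y j ≠ 0)
    (hα : ∀ i, 1 ≤ i → i ≤ N + 1 → α i ≠ 0)
    (hz : ∀ i t, 1 ≤ i → i ≤ N + 1 → 1 ≤ t → z i t ≠ 0)
    (hrec : ∀ t, 1 ≤ t → ∀ i, 1 ≤ i → i ≤ N + 1 →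
      z i (t + 1) * z i t = ext N z (i - 1) (t + 1) * ext N z (i + 1) t + 1)
    (hα1 : ∀ i, 2 ≤ i → i ≤ N → α (i + 1) = α (i - 1) * (y i)⁻¹)
    (hα2 : α 2 * α (N + 1) = (y 1)⁻¹)
    (hα3 : α 1 * α N = y (N + 1)) :
    ∀ t, 1 ≤ t → ∀ i, 1 ≤ i → i ≤ N + 1 →
      ext N z (i - 1) (t + 1) * ext N z (i + 1) t =
        cK N y i t * ext N (fun a b => xK N y α z a b) (i - 1) (t + 1) *
          ext N (fun a b => xK N y α z a b) (i + 1) t ∧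
      cK N y i t * xK N y α z i (t + 1) * xK N y α z i t =
        cK N y i t * ext N (fun a b => xK N y α z a b) (i - 1) (t + 1) *
          ext N (fun a b => xK N y α z a b) (i + 1) t + 1 := by
  intro t ht i h1 h2
  have hA := main_A N y α z hN hy hα hz hα1 hα2 hα3 t ht i h1 h2
  refine ⟨hA, ?_⟩
  rw [xK_mul N y α z hN hy hα hz i t ht h1 h2, hrec t ht i h1 h2, hA]
end

section
/- Suppose α_1,…,α_{N+1} ∈ K are nonzero and satisfy α_{i+1} = α_{i−1} y_i^{−1} for 2 ≤ i ≤ N, α_2 α_{N+1} = y_1^{−1}, and α_1 α_N = y_{N+1}. Then: (i) if N is even, α_1 α_2 = y_1^{−1} y_2 y_4 ⋯ y_N and α_1 α_2 = y_3 y_5 ⋯ y_{N+1}, and consequently the initial coefficients necessarily satisfy y_1 y_3 y_5 ⋯ y_{N+1} = y_2 y_4 ⋯ y_N; (ii) if N is odd, (α_2)^2 = y_1^{−1} y_3 y_5 ⋯ y_N and (α_1)^2 = y_2 y_4 ⋯ y_{N+1}. -/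
/-!
Rewriting the recursion as `α (i + 1) * y i = α (i - 1)` and telescoping it along the odd and
along the even indices gives `α (2m + 1) * y 2 y 4 ⋯ y (2m) = α 1` and
`α (2m + 2) * y 3 y 5 ⋯ y (2m + 1) = α 2`. Multiplying these by `α 2`, resp. `α 1`, and
inserting the boundary relations `α 2 α (N + 1) = y 1⁻¹` and `α 1 α N = y (N + 1)` yields all
the identities.
-/

open Finset

theorem Finset.mul_prod_Icc_eq_of_mul_eq {M : Type*} [CommMonoid M] {a b : ℕ → M} {m : ℕ}
    (h : ∀ j < m, a (j + 1) * b (j + 1) = a j) :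
    a m * ∏ j ∈ Icc 1 m, b j = a 0 := by
  induction m with
  | zero => simp
  | succ m ih =>
    rw [prod_Icc_succ_top (by omega), mul_comm _ (b (m + 1)), ← mul_assoc, h m (by omega)]
    exact ih fun j hj => h j (by omega)

section Recursion

variable {M : Type*} [CommMonoid M] {N m : ℕ} {y α : ℕ → M}

theorem odd_term_mul_prod_even_coeffs
    (hrec : ∀ i, 2 ≤ i → i ≤ N → α (i + 1) * y i = α (i - 1))
    (hm : 2 * m ≤ N) :
    α (2 * m + 1) * ∏ j ∈ Icc 1 m, y (2 * j) = α 1 :=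
  mul_prod_Icc_eq_of_mul_eq (a := fun j => α (2 * j + 1)) fun j hj => by
    simpa [mul_add, add_assoc] using hrec (2 * j + 2) (by omega) (by omega)

theorem even_term_mul_prod_odd_coeffs
    (hrec : ∀ i, 2 ≤ i → i ≤ N → α (i + 1) * y i = α (i - 1))
    (hm : 2 * m + 1 ≤ N) :
    α (2 * m + 2) * ∏ j ∈ Icc 1 m, y (2 * j + 1) = α 2 :=
  mul_prod_Icc_eq_of_mul_eq (a := fun j => α (2 * j + 2)) fun j hj => by
    simpa [mul_add, add_assoc] using hrec (2 * j + 3) (by omega) (by omega)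

end Recursion

theorem stmt9_general {K : Type*} [Field K] (N : ℕ) (hN : 2 ≤ N) (y α : ℕ → K)
    (hy : ∀ j, 1 ≤ j → j ≤ N + 1 → y j ≠ 0)
    (hα1 : ∀ i, 2 ≤ i → i ≤ N → α (i + 1) = α (i - 1) * (y i)⁻¹)
    (hα2 : α 2 * α (N + 1) = (y 1)⁻¹)
    (hα3 : α 1 * α N = y (N + 1)) :
    (Even N →
      α 1 * α 2 = (y 1)⁻¹ * ∏ j ∈ Finset.Icc 1 (N / 2), y (2 * j) ∧
      α 1 * α 2 = ∏ j ∈ Finset.Icc 1 (N / 2), y (2 * j + 1) ∧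
      y 1 * ∏ j ∈ Finset.Icc 1 (N / 2), y (2 * j + 1) =
        ∏ j ∈ Finset.Icc 1 (N / 2), y (2 * j)) ∧
    (Odd N →
      α 2 ^ 2 = (y 1)⁻¹ * ∏ j ∈ Finset.Icc 1 ((N - 1) / 2), y (2 * j + 1) ∧
      α 1 ^ 2 = ∏ j ∈ Finset.Icc 1 ((N + 1) / 2), y (2 * j)) := by
  have hrec : ∀ i, 2 ≤ i → i ≤ N → α (i + 1) * y i = α (i - 1) := fun i hi hiN =>
    (eq_mul_inv_iff_mul_eq₀ (hy i (by omega) (by omega))).mp (hα1 i hi hiN)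
  constructor
  · rintro ⟨m, hm⟩
    obtain ⟨k, rfl⟩ : ∃ k, N = 2 * k + 2 := ⟨m - 1, by omega⟩
    have hA := odd_term_mul_prod_even_coeffs (m := k + 1) hrec (by omega)
    have hB := even_term_mul_prod_odd_coeffs (m := k) hrec (by omega)
    rw [show (2 * k + 2) / 2 = k + 1 by omega]
    rw [show 2 * (k + 1) + 1 = 2 * k + 2 + 1 by ring] at hA
    have heven : α 1 * α 2 = (y 1)⁻¹ * ∏ j ∈ Icc 1 (k + 1), y (2 * j) := by
      rw [← hα2, ← hA]; ring
    have hodd : α 1 * α 2 = ∏ j ∈ Icc 1 (k + 1), y (2 * j + 1) := by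
      rw [prod_Icc_succ_top (by omega), show 2 * (k + 1) + 1 = 2 * k + 2 + 1 by ring, ← hα3,
        ← hB]
      ring
    refine ⟨heven, hodd, ?_⟩
    rw [← hodd, heven, mul_inv_cancel_left₀ (hy 1 le_rfl (by omega))]
  · rintro ⟨m, rfl⟩
    have hA := odd_term_mul_prod_even_coeffs (m := m) hrec (by omega)
    have hB := even_term_mul_prod_odd_coeffs (m := m) hrec le_rfl
    rw [show (2 * m + 1 - 1) / 2 = m by omega, show (2 * m + 1 + 1) / 2 = m + 1 by omega,
      prod_Icc_succ_top (by omega), show 2 * (m + 1) = 2 * m + 1 + 1 by ring]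
    constructor
    · rw [← hα2, ← hB]; ring
    · rw [← hα3, ← hA]; ring

theorem stmt9 {K : Type*} [Field K] (N : ℕ) (hN : 2 ≤ N) (y α : ℕ → K)
    (hy : ∀ j, 1 ≤ j → j ≤ N + 1 → y j ≠ 0)
    (hα : ∀ i, 1 ≤ i → i ≤ N + 1 → α i ≠ 0)
    (hα1 : ∀ i, 2 ≤ i → i ≤ N → α (i + 1) = α (i - 1) * (y i)⁻¹)
    (hα2 : α 2 * α (N + 1) = (y 1)⁻¹)
    (hα3 : α 1 * α N = y (N + 1)) :
    (Even N →
      α 1 * α 2 = (y 1)⁻¹ * ∏ j ∈ Finset.Icc 1 (N / 2), y (2 * j) ∧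
      α 1 * α 2 = ∏ j ∈ Finset.Icc 1 (N / 2), y (2 * j + 1) ∧
      y 1 * ∏ j ∈ Finset.Icc 1 (N / 2), y (2 * j + 1) =
        ∏ j ∈ Finset.Icc 1 (N / 2), y (2 * j)) ∧
    (Odd N →
      α 2 ^ 2 = (y 1)⁻¹ * ∏ j ∈ Finset.Icc 1 ((N - 1) / 2), y (2 * j + 1) ∧
      α 1 ^ 2 = ∏ j ∈ Finset.Icc 1 ((N + 1) / 2), y (2 * j)) :=
  stmt9_general N hN y α hy hα1 hα2 hα3
end

section
/- For every t ≥ 1 the Laurent polynomials λ_i^t satisfy λ_i^{t+1} = λ_{i+1}^t for i = 1,…,N−1 and λ_N^{t+1} = λ_1^t. Consequently every λ_i^t is periodic in t with period N: λ_i^{t+N} = λ_i^t for all i = 1,…,N and t ≥ 1. -/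
/-- The Laurent polynomials `λ_i^t`: `λ_i^t = (z_i^t + z_{i+2}^t)/z_{i+1}^t` for
`1 ≤ i ≤ N-1` and `λ_N^t = (z_1^t z_N^t + z_2^t z_{N+1}^t + 1)/(z_1^t z_{N+1}^t)`. -/
def lam {K : Type*} [Field K] (N : ℕ) (z : ℕ → ℕ → K) (i t : ℕ) : K :=
  if i = N then (z 1 t * z N t + z 2 t * z (N + 1) t + 1) / (z 1 t * z (N + 1) t)
  else (z i t + z (i + 2) t) / z (i + 1) t

theorem stmt11 {K : Type*} [Field K] (N : ℕ) (hN : 2 ≤ N) (z : ℕ → ℕ → K)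
    (hz : ∀ i t, 1 ≤ i → i ≤ N + 1 → 1 ≤ t → z i t ≠ 0)
    (hrec : ∀ t, 1 ≤ t → ∀ i, 1 ≤ i → i ≤ N + 1 →
      z i (t + 1) * z i t = ext N z (i - 1) (t + 1) * ext N z (i + 1) t + 1) :
    (∀ t, 1 ≤ t → ∀ i, 1 ≤ i → i ≤ N - 1 → lam N z i (t + 1) = lam N z (i + 1) t) ∧
    (∀ t, 1 ≤ t → lam N z N (t + 1) = lam N z 1 t) ∧
    (∀ t, 1 ≤ t → ∀ i, 1 ≤ i → i ≤ N → lam N z i (t + N) = lam N z i t) := by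
  -- Cleaned-up middle recurrences (no boundary terms)
  have Rmid : ∀ t, 1 ≤ t → ∀ a b c : ℕ, b = a + 1 → c = a + 2 → 1 ≤ a → c ≤ N + 1 →
      z b (t + 1) * z b t = z a (t + 1) * z c t + 1 := by
    intro t ht a b c hb hc ha hcN
    subst hb hc
    have h := hrec t ht (a + 1) (by omega) (by omega)
    rwa [show a + 1 - 1 = a from by omega,
      show ext N z a (t + 1) = z a (t + 1) from by
        unfold ext; rw [if_neg (by omega), if_neg (by omega)],
      show ext N z (a + 1 + 1) t = z (a + 2) t from by
        unfold ext; rw [if_neg (by omega), if_neg (by omega)]] at h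
  -- Recurrence at i = 1 (left boundary)
  have R1 : ∀ t, 1 ≤ t → z 1 (t + 1) * z 1 t = z (N + 1) t * z 2 t + 1 := by
    intro t ht
    have h := hrec t ht 1 le_rfl (by omega)
    rwa [show (1 : ℕ) - 1 = 0 from rfl,
      show ext N z 0 (t + 1) = z (N + 1) t from by unfold ext; simp,
      show ext N z (1 + 1) t = z 2 t from by
        unfold ext; rw [if_neg (by omega), if_neg (by omega)]] at h
  -- Recurrence at i = N + 1 (right boundary)
  have Rtop : ∀ t, 1 ≤ t → z (N + 1) (t + 1) * z (N + 1) t = z N (t + 1) * z 1 (t + 1) + 1 := by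
    intro t ht
    have h := hrec t ht (N + 1) (by omega) le_rfl
    rwa [show N + 1 - 1 = N from by omega,
      show ext N z N (t + 1) = z N (t + 1) from by
        unfold ext; rw [if_neg (by omega), if_neg (by omega)],
      show ext N z (N + 1 + 1) t = z 1 (t + 1) from by
        unfold ext; rw [if_neg (by omega), if_pos (by omega)]] at h
  -- The key one-step shift
  have key : ∀ t, 1 ≤ t → ∀ i, 1 ≤ i → i ≤ N →
      lam N z i (t + 1) = lam N z (i % N + 1) t := by
    intro t ht i hi1 hiN
    have hz1t : z 1 t ≠ 0 := hz 1 t le_rfl (by omega) ht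
    have hz2t : z 2 t ≠ 0 := hz 2 t (by omega) (by omega) ht
    have hzN1t : z (N + 1) t ≠ 0 := hz (N + 1) t (by omega) le_rfl ht
    rcases eq_or_lt_of_le hiN with hIN | hlt
    · -- i = N
      rw [hIN, Nat.mod_self]
      have hB := Rtop t ht
      have hC := R1 t ht
      have hD := Rmid t ht 1 2 3 rfl rfl le_rfl (by omega)
      rw [lam, lam, if_pos rfl, if_neg (by omega)]
      rw [div_eq_div_iff
        (mul_ne_zero (hz 1 (t + 1) le_rfl (by omega) (by omega))
          (hz (N + 1) (t + 1) (by omega) le_rfl (by omega)))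
        (show z (1 + 1) t ≠ 0 from hz2t)]
      linear_combination (z (N + 1) (t + 1)) * hD - (z (N + 1) (t + 1)) * hC - (z 2 t) * hB
    · rw [Nat.mod_eq_of_lt hlt]
      rcases eq_or_lt_of_le (show i ≤ N - 1 from by omega) with hI | hI
      · -- i = N - 1
        subst hI
        have hA := Rmid t ht (N - 1) N (N + 1) (by omega) (by omega) (by omega) le_rfl
        have hB := Rtop t ht
        have hC := R1 t ht
        rw [lam, lam, if_neg (by omega), if_pos (by omega),
          show N - 1 + 2 = N + 1 from by omega, show N - 1 + 1 = N from by omega]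
        rw [div_eq_div_iff (hz N (t + 1) (by omega) (by omega) (by omega))
          (mul_ne_zero hz1t hzN1t)]
        linear_combination (-(z 1 t)) * hA + (z 1 t) * hB + (z N (t + 1)) * hC
      · -- i ≤ N - 2
        have h1 := Rmid t ht i (i + 1) (i + 2) rfl rfl hi1 (by omega)
        have h2 := Rmid t ht (i + 1) (i + 2) (i + 3) rfl rfl (by omega) (by omega)
        rw [lam, lam, if_neg (by omega), if_neg (by omega),
          show i + 1 + 2 = i + 3 from by omega, show i + 1 + 1 = i + 2 from by omega]
        rw [div_eq_div_iff (hz (i + 1) (t + 1) (by omega) (by omega) (by omega))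
          (hz (i + 2) t (by omega) (by omega) ht)]
        linear_combination h2 - h1
  -- Iterated shift
  have per : ∀ k t, 1 ≤ t → ∀ j, j < N →
      lam N z (j + 1) (t + k) = lam N z ((j + k) % N + 1) t := by
    intro k
    induction k with
    | zero =>
      intro t ht j hj
      simp [Nat.mod_eq_of_lt hj]
    | succ k ih =>
      intro t ht j hj
      rw [show t + (k + 1) = (t + k) + 1 from by omega,
        key (t + k) (by omega) (j + 1) (by omega) (by omega),
        ih t ht ((j + 1) % N) (Nat.mod_lt _ (by omega)),
        Nat.mod_add_mod, show j + 1 + k = j + (k + 1) from by omega]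
  refine ⟨?_, ?_, ?_⟩
  · intro t ht i hi1 hi2
    have h := key t ht i hi1 (by omega)
    rwa [Nat.mod_eq_of_lt (by omega)] at h
  · intro t ht
    have h := key t ht N (by omega) le_rfl
    rwa [Nat.mod_self] at h
  · intro t ht i hi1 hiN
    have h := per N t ht (i - 1) (by omega)
    rwa [show i - 1 + 1 = i from by omega, Nat.add_mod_right,
      Nat.mod_eq_of_lt (by omega), show i - 1 + 1 = i from by omega] at h
end

section
/- For every t ≥ 1, the subring of K generated by {λ_1^t, λ_2^t, …, λ_N^t} (i.e., the ℤ-subalgebra adjoined by these elements) equals the subring of K generated by {λ_1^1, λ_2^1, …, λ_N^1}. -/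
def Recurrence {K : Type*} [Semiring K] (N : ℕ) (z : ℕ → ℕ → K) : Prop :=
  ∀ t, 1 ≤ t → ∀ i, 1 ≤ i → i ≤ N + 1 →
    z i (t + 1) * z i t = ext N z (i - 1) (t + 1) * ext N z (i + 1) t + 1

theorem div_eq_div_of_mul_eq_mul_add_one {K : Type*} [Field K] {a' b' c' b c d : K}
    (hb' : b' ≠ 0) (hc : c ≠ 0) (h₁ : b' * b = a' * c + 1) (h₂ : c' * c = b' * d + 1) :
    (a' + c') / b' = (b + d) / c := by
  rw [div_eq_div_iff hb' hc]
  linear_combination h₂ - h₁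

section ext

variable {K : Type*} {N : ℕ} {f : ℕ → ℕ → K}

theorem ext_of_le (i t : ℕ) (h₁ : 1 ≤ i) (h₂ : i ≤ N + 1) : ext N f i t = f i t := by
  rw [ext, if_neg (by omega), if_neg (by omega)]

theorem ext_zero_succ (t : ℕ) : ext N f 0 (t + 1) = f (N + 1) t := by
  simp [ext]

theorem ext_add_two (t : ℕ) : ext N f (N + 2) t = f 1 (t + 1) := by
  simp [ext]

end ext

namespace Recurrence

variable {K : Type*} [Field K] {N : ℕ} {z : ℕ → ℕ → K} {t : ℕ}

theorem interior (hrec : Recurrence N z) (ht : 1 ≤ t) {i : ℕ} (hi : 1 ≤ i) (hiN : i + 1 ≤ N) :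
    z (i + 1) (t + 1) * z (i + 1) t = z i (t + 1) * z (i + 2) t + 1 := by
  have h := hrec t ht (i + 1) (by omega) (by omega)
  rwa [Nat.add_sub_cancel, ext_of_le i _ hi (by omega), ext_of_le (i + 2) _ (by omega)
    (by omega)] at h

theorem first (hN : 2 ≤ N) (hrec : Recurrence N z) (ht : 1 ≤ t) :
    z 1 (t + 1) * z 1 t = z (N + 1) t * z 2 t + 1 := by
  have h := hrec t ht 1 le_rfl (by omega)
  rwa [Nat.sub_self, ext_zero_succ, ext_of_le (N := N) 2 _ (by omega) (by omega)] at h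

theorem last (hN : 1 ≤ N) (hrec : Recurrence N z) (ht : 1 ≤ t) :
    z (N + 1) (t + 1) * z (N + 1) t = z N (t + 1) * z 1 (t + 1) + 1 := by
  have h := hrec t ht (N + 1) (by omega) le_rfl
  rwa [Nat.add_sub_cancel, ext_add_two, ext_of_le N _ hN N.le_succ] at h

end Recurrence

section lam

variable {K : Type*} [Field K] {N : ℕ} {z : ℕ → ℕ → K} {t : ℕ}

theorem lam_last_eq (hN : 2 ≤ N) (hz : ∀ i t, 1 ≤ i → i ≤ N + 1 → 1 ≤ t → z i t ≠ 0)
    (hrec : Recurrence N z) (ht : 1 ≤ t) :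
    lam N z N t = (z N t + z 1 (t + 1)) / z (N + 1) t := by
  have h1 := hz 1 t le_rfl (by omega) ht
  have hN1 := hz (N + 1) t (by omega) le_rfl ht
  rw [lam, if_pos rfl, div_eq_div_iff (mul_ne_zero h1 hN1) hN1]
  linear_combination -z (N + 1) t * hrec.first hN ht

theorem lam_last_succ_eq (hN : 1 ≤ N) (hz : ∀ i t, 1 ≤ i → i ≤ N + 1 → 1 ≤ t → z i t ≠ 0)
    (hrec : Recurrence N z) (ht : 1 ≤ t) :
    lam N z N (t + 1) = (z (N + 1) t + z 2 (t + 1)) / z 1 (t + 1) := by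
  have h1 := hz 1 (t + 1) le_rfl (by omega) (by omega)
  have hN1 := hz (N + 1) (t + 1) (by omega) le_rfl (by omega)
  rw [lam, if_pos rfl, div_eq_div_iff (mul_ne_zero h1 hN1) h1]
  linear_combination -z 1 (t + 1) * hrec.last hN ht

theorem lam_succ_of_add_one_lt (hz : ∀ i t, 1 ≤ i → i ≤ N + 1 → 1 ≤ t → z i t ≠ 0)
    (hrec : Recurrence N z) (ht : 1 ≤ t) {i : ℕ} (hi : 1 ≤ i) (hiN : i + 1 < N) :
    lam N z i (t + 1) = lam N z (i + 1) t := by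
  rw [lam, lam, if_neg (by omega), if_neg (by omega)]
  exact div_eq_div_of_mul_eq_mul_add_one (hz _ _ (by omega) (by omega) (by omega))
    (hz _ _ (by omega) (by omega) ht) (hrec.interior ht hi hiN.le)
    (hrec.interior ht (by omega) (by omega))

theorem lam_succ_of_add_one_eq (hN : 2 ≤ N)
    (hz : ∀ i t, 1 ≤ i → i ≤ N + 1 → 1 ≤ t → z i t ≠ 0)
    (hrec : Recurrence N z) (ht : 1 ≤ t) {i : ℕ} (hi : 1 ≤ i) (hiN : i + 1 = N) :
    lam N z i (t + 1) = lam N z N t := by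
  subst hiN
  rw [lam_last_eq hN hz hrec ht, lam, if_neg (by omega)]
  exact div_eq_div_of_mul_eq_mul_add_one (hz _ _ (by omega) (by omega) (by omega))
    (hz _ _ (by omega) le_rfl ht) (hrec.interior ht hi le_rfl) (hrec.last (by omega) ht)

theorem lam_last_succ (hN : 2 ≤ N) (hz : ∀ i t, 1 ≤ i → i ≤ N + 1 → 1 ≤ t → z i t ≠ 0)
    (hrec : Recurrence N z) (ht : 1 ≤ t) :
    lam N z N (t + 1) = lam N z 1 t := by
  rw [lam_last_succ_eq (by omega) hz hrec ht, lam, if_neg (by omega)]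
  exact div_eq_div_of_mul_eq_mul_add_one (hz _ _ le_rfl (by omega) (by omega))
    (hz _ _ (by omega) (by omega) ht) (hrec.first hN ht) (hrec.interior ht le_rfl hN)

theorem lam_succ_eq_lam_cycle (hN : 2 ≤ N)
    (hz : ∀ i t, 1 ≤ i → i ≤ N + 1 → 1 ≤ t → z i t ≠ 0)
    (hrec : Recurrence N z) (ht : 1 ≤ t) {i : ℕ} (hi : 1 ≤ i) (hiN : i ≤ N) :
    lam N z i (t + 1) = lam N z (if i = N then 1 else i + 1) t := by
  split_ifs with h
  · subst h
    exact lam_last_succ hN hz hrec ht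
  · rcases (show i + 1 < N ∨ i + 1 = N by omega) with hlt | heq
    · exact lam_succ_of_add_one_lt hz hrec ht hi hlt
    · rw [heq]
      exact lam_succ_of_add_one_eq hN hz hrec ht hi heq

theorem setOf_lam_succ (hN : 2 ≤ N) (hz : ∀ i t, 1 ≤ i → i ≤ N + 1 → 1 ≤ t → z i t ≠ 0)
    (hrec : Recurrence N z) (ht : 1 ≤ t) :
    {w : K | ∃ i, 1 ≤ i ∧ i ≤ N ∧ w = lam N z i (t + 1)} =
      {w : K | ∃ i, 1 ≤ i ∧ i ≤ N ∧ w = lam N z i t} := by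
  have hcycle := fun i ↦ lam_succ_eq_lam_cycle hN hz hrec ht (i := i)
  ext w
  constructor
  · rintro ⟨i, hi, hiN, rfl⟩
    exact ⟨if i = N then 1 else i + 1, by split_ifs <;> omega, by split_ifs <;> omega, hcycle i hi hiN⟩
  · rintro ⟨j, hj, hjN, rfl⟩
    refine ⟨if j = 1 then N else j - 1, by split_ifs <;> omega, by split_ifs <;> omega, ?_⟩
    rw [hcycle _ (by split_ifs <;> omega) (by split_ifs <;> omega)]
    congr 1
    split_ifs <;> omega

end lam

theorem stmt12 {K : Type*} [Field K] (N : ℕ) (hN : 2 ≤ N) (z : ℕ → ℕ → K)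
    (hz : ∀ i t, 1 ≤ i → i ≤ N + 1 → 1 ≤ t → z i t ≠ 0)
    (hrec : ∀ t, 1 ≤ t → ∀ i, 1 ≤ i → i ≤ N + 1 →
      z i (t + 1) * z i t = ext N z (i - 1) (t + 1) * ext N z (i + 1) t + 1) :
    ∀ t, 1 ≤ t →
      Subring.closure {w : K | ∃ i, 1 ≤ i ∧ i ≤ N ∧ w = lam N z i t} =
        Subring.closure {w : K | ∃ i, 1 ≤ i ∧ i ≤ N ∧ w = lam N z i 1} := by
  refine Nat.le_induction rfl fun t ht ih ↦ ?_
  rw [setOf_lam_succ hN hz hrec ht, ih]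
end

section
/- For every n = 1,…,N, the n-th elementary symmetric polynomial q_n^t := Σ_{I ⊆ {1,…,N}, |I| = n} ∏_{i∈I} λ_i^t is a conserved quantity of the dynamics: q_n^t = q_n^1 for all t ≥ 1. -/
/-- The cyclic shift permutation on `{1, …, N}` (identity elsewhere). -/
def cyc (N : ℕ) : ℕ ≃ ℕ where
  toFun i := if 1 ≤ i ∧ i < N then i + 1 else if i = N ∧ 1 ≤ N then 1 else i
  invFun j := if 2 ≤ j ∧ j ≤ N then j - 1 else if j = 1 ∧ 1 ≤ N then N else j
  left_inv i := by dsimp only; split_ifs <;> omega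
  right_inv j := by dsimp only; split_ifs <;> omega

lemma cyc_map_Icc (N : ℕ) : (Finset.Icc 1 N).map (cyc N).toEmbedding = Finset.Icc 1 N := by
  rw [Finset.map_eq_image]
  ext j
  simp only [Finset.mem_image, Finset.mem_Icc, Equiv.coe_toEmbedding, cyc, Equiv.coe_fn_mk]
  constructor
  · rintro ⟨i, hi, rfl⟩; split_ifs <;> omega
  · intro hj
    by_cases hj1 : j = 1
    · exact ⟨N, by omega, by split_ifs <;> omega⟩
    · exact ⟨j - 1, by omega, by split_ifs <;> omega⟩

lemma key_shift {K : Type*} [Field K] (N : ℕ) (hN : 2 ≤ N) (z : ℕ → ℕ → K)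
    (hz : ∀ i t, 1 ≤ i → i ≤ N + 1 → 1 ≤ t → z i t ≠ 0)
    (hrec : ∀ t, 1 ≤ t → ∀ i, 1 ≤ i → i ≤ N + 1 →
      z i (t + 1) * z i t = ext N z (i - 1) (t + 1) * ext N z (i + 1) t + 1)
    (t : ℕ) (ht : 1 ≤ t) (i : ℕ) (h1 : 1 ≤ i) (h2 : i ≤ N) :
    lam N z i (t + 1) = lam N z (cyc N i) t := by
  -- clean recurrences
  have rec1 : z 1 (t + 1) * z 1 t = z (N + 1) t * z 2 t + 1 := by
    have h := hrec t ht 1 le_rfl (by omega)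
    rw [show (1 : ℕ) - 1 = 0 from rfl, ext, if_pos rfl, show t + 1 - 1 = t from rfl] at h
    rw [ext, if_neg (by omega), if_neg (by omega)] at h
    exact h
  have recmid : ∀ j, 1 ≤ j → j + 1 ≤ N →
      z (j + 1) (t + 1) * z (j + 1) t = z j (t + 1) * z (j + 2) t + 1 := by
    intro j hj1 hj2
    have h := hrec t ht (j + 1) (by omega) (by omega)
    rw [show j + 1 - 1 = j from rfl] at h
    rw [ext, if_neg (by omega), if_neg (by omega)] at h
    rw [ext, if_neg (by omega), if_neg (by omega)] at h
    exact h
  have reclast : z (N + 1) (t + 1) * z (N + 1) t = z N (t + 1) * z 1 (t + 1) + 1 := by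
    have h := hrec t ht (N + 1) (by omega) (by omega)
    rw [show N + 1 - 1 = N from rfl] at h
    rw [ext, if_neg (by omega), if_neg (by omega)] at h
    rw [ext, if_neg (by omega), if_pos rfl] at h
    exact h
  by_cases hiN : i = N
  · -- λ_N^{t+1} = λ_1^t
    have hc : cyc N i = 1 := by simp only [cyc, Equiv.coe_fn_mk]; split_ifs <;> omega
    rw [hc, lam, if_pos hiN, lam, if_neg (by omega : ¬ (1 : ℕ) = N)]
    have A1 := rec1
    have A2 := recmid 1 le_rfl (by omega)
    have AN1 := reclast
    have n1 : z 1 (t + 1) ≠ 0 := hz 1 (t + 1) le_rfl (by omega) (by omega)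
    have n2 : z (N + 1) (t + 1) ≠ 0 := hz (N + 1) (t + 1) (by omega) (by omega) (by omega)
    have n3 : z 2 t ≠ 0 := hz 2 t (by omega) (by omega) ht
    field_simp
    linear_combination z (N + 1) (t + 1) * A2 - z (N + 1) (t + 1) * A1 - z 2 t * AN1
  · by_cases hi1 : i + 1 = N
    · -- λ_{N-1}^{t+1} = λ_N^t
      subst hi1
      have hc : cyc (i + 1) i = i + 1 := by
        simp only [cyc, Equiv.coe_fn_mk]; split_ifs <;> omega
      rw [hc, lam, if_neg hiN, lam, if_pos rfl]
      have A1 := rec1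
      have AN := recmid i h1 le_rfl
      have AN1 := reclast
      have n1 : z (i + 1) (t + 1) ≠ 0 := hz (i + 1) (t + 1) (by omega) (by omega) (by omega)
      have n2 : z 1 t ≠ 0 := hz 1 t le_rfl (by omega) ht
      have n3 : z (i + 1 + 1) t ≠ 0 := hz (i + 1 + 1) t (by omega) (by omega) ht
      field_simp
      linear_combination (- z 1 t) * AN + z 1 t * AN1 + z (i + 1) (t + 1) * A1
    · -- generic case
      have hc : cyc N i = i + 1 := by
        simp only [cyc, Equiv.coe_fn_mk]; split_ifs <;> omega
      rw [hc, lam, if_neg hiN, lam, if_neg hi1]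
      have A := recmid i h1 (by omega)
      have B := recmid (i + 1) (by omega) (by omega)
      have n1 : z (i + 1) (t + 1) ≠ 0 := hz (i + 1) (t + 1) (by omega) (by omega) (by omega)
      have n2 : z (i + 2) t ≠ 0 := hz (i + 2) t (by omega) (by omega) ht
      field_simp
      linear_combination B - A

theorem stmt13 {K : Type*} [Field K] (N : ℕ) (hN : 2 ≤ N) (z : ℕ → ℕ → K)
    (hz : ∀ i t, 1 ≤ i → i ≤ N + 1 → 1 ≤ t → z i t ≠ 0)
    (hrec : ∀ t, 1 ≤ t → ∀ i, 1 ≤ i → i ≤ N + 1 →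
      z i (t + 1) * z i t = ext N z (i - 1) (t + 1) * ext N z (i + 1) t + 1) :
    ∀ n, 1 ≤ n → n ≤ N → ∀ t, 1 ≤ t →
      ∑ I ∈ (Finset.Icc 1 N).powersetCard n, ∏ i ∈ I, lam N z i t =
        ∑ I ∈ (Finset.Icc 1 N).powersetCard n, ∏ i ∈ I, lam N z i 1 := by
  intro n _ _ t ht
  have step : ∀ s, 1 ≤ s →
      ∑ I ∈ (Finset.Icc 1 N).powersetCard n, ∏ i ∈ I, lam N z i (s + 1) =
        ∑ I ∈ (Finset.Icc 1 N).powersetCard n, ∏ i ∈ I, lam N z i s := by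
    intro s hs
    calc ∑ I ∈ (Finset.Icc 1 N).powersetCard n, ∏ i ∈ I, lam N z i (s + 1)
        = ∑ I ∈ (Finset.Icc 1 N).powersetCard n, ∏ i ∈ I.map (cyc N).toEmbedding,
            lam N z i s := by
          refine Finset.sum_congr rfl fun I hI => ?_
          rw [Finset.prod_map]
          refine Finset.prod_congr rfl fun i hi => ?_
          have hmem := (Finset.mem_powersetCard.mp hI).1 hi
          rw [Finset.mem_Icc] at hmem
          exact key_shift N hN z hz hrec s hs i hmem.1 hmem.2
      _ = ∑ I ∈ ((Finset.Icc 1 N).powersetCard n).map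
            (Finset.mapEmbedding (cyc N).toEmbedding).toEmbedding,
            ∏ i ∈ I, lam N z i s := by
          rw [Finset.sum_map]
          exact Finset.sum_congr rfl fun I _ => rfl
      _ = ∑ I ∈ (Finset.Icc 1 N).powersetCard n, ∏ i ∈ I, lam N z i s := by
          rw [← Finset.powersetCard_map, cyc_map_Icc]
  induction t, ht using Nat.le_induction with
  | base => rfl
  | succ t ht ih => rw [step t ht, ih]
end

section
/- With W′, Z_1′, …, Z_{N+1}′ defined by the homogeneous formulas of degree N+3 below, one has W′ ≠ 0, and the inhomogeneous ratios z_i := Z_i/W and z_i′ := Z_i′/W′ satisfy z_i′ z_i = z_{i−1}′ z_{i+1} + 1 for i = 1,…,N+1, with the conventions z_0′ := z_{N+1} and z_{N+2} := z_1′. The formulas are: W′ = W Z_1 ∏_{j=1}^{N+1} Z_j; for i = 1,…,N, Z_i′ = Z_1 (∏_{j=i+1}^{N+1} Z_j) ( Z_{N+1} ∏_{j=2}^{i+1} Z_j + W² S_i ); and Z_{N+1}′ = W² Z_1 ∏_{j=1}^{N} Z_j + ( Z_{N+1} ∏_{j=2}^{N+1} Z_j + W² S_N )( Z_{N+1} Z_2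 + W² ), where S_1 := 1 and, for 2 ≤ i ≤ N, S_i := Σ_{k=1}^{i} ∏_{j ∈ {1,…,i+1} ∖ {k, k+1}} Z_j. -/
/-! Dividing by `W'` cancels the common factor `Z_1 ∏_{j>i} Z_j`, leaving
`z_i' = (Z_{N+1} ∏_{j=2}^{i+1} Z_j + W² S_i) / (W ∏_{j=1}^{i} Z_j)` for `0 ≤ i ≤ N`; at `i = 0`
this is `z_{N+1}`, which is exactly the convention `z_0' = z_{N+1}`. The exchange relations for
`i ≤ N` then reduce to the recursion `S_{i+1} = S_i Z_{i+2} + ∏_{j=1}^{i} Z_j`, and the last one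
to the shape of `Z_{N+1}'`, whose extra term `W² Z_1 ∏_{j=1}^{N} Z_j` accounts for the `+ 1`. -/

/-- `S_i`: `S_1 = 1` and, for `i ≥ 2`,
`S_i = ∑_{k=1}^{i} ∏_{j ∈ {1,…,i+1} ∖ {k,k+1}} Z_j`. -/
def Spoly {K : Type*} [Field K] (Z : ℕ → K) (i : ℕ) : K :=
  if i = 1 then 1
  else ∑ k ∈ Finset.Icc 1 i, ∏ j ∈ Finset.Icc 1 (i + 1) \ {k, k + 1}, Z j

/-- `W' = W Z_1 ∏_{j=1}^{N+1} Z_j`. -/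
def Wnew {K : Type*} [Field K] (N : ℕ) (W : K) (Z : ℕ → K) : K :=
  W * Z 1 * ∏ j ∈ Finset.Icc 1 (N + 1), Z j

/-- The homogeneous formulas of degree `N+3` for `Z_i'` (`1 ≤ i ≤ N`) and `Z_{N+1}'`. -/
def Znew {K : Type*} [Field K] (N : ℕ) (W : K) (Z : ℕ → K) (i : ℕ) : K :=
  if i = N + 1 then
    W ^ 2 * Z 1 * ∏ j ∈ Finset.Icc 1 N, Z j +
      (Z (N + 1) * ∏ j ∈ Finset.Icc 2 (N + 1), Z j + W ^ 2 * Spoly Z N) *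
        (Z (N + 1) * Z 2 + W ^ 2)
  else
    Z 1 * (∏ j ∈ Finset.Icc (i + 1) (N + 1), Z j) *
      (Z (N + 1) * ∏ j ∈ Finset.Icc 2 (i + 1), Z j + W ^ 2 * Spoly Z i)

open Finset

lemma prod_Icc_mul_prod_Icc {M : Type*} [CommMonoid M] (f : ℕ → M) {a m n : ℕ}
    (ham : a ≤ m) (hmn : m ≤ n) :
    (∏ j ∈ Icc (a + 1) m, f j) * ∏ j ∈ Icc (m + 1) n, f j = ∏ j ∈ Icc (a + 1) n, f j := by
  simpa only [Icc_add_one_left_eq_Ioc] using prod_Ioc_consecutive f ham hmn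

lemma Spoly_eq_sum {K : Type*} [Field K] (Z : ℕ → K) (i : ℕ) :
    Spoly Z i = ∑ k ∈ Icc 1 i, ∏ j ∈ Icc 1 (i + 1) \ {k, k + 1}, Z j := by
  unfold Spoly
  split_ifs with h
  · subst h
    simp [show Icc 1 2 \ ({1, 2} : Finset ℕ) = ∅ by decide]
  · rfl

lemma Spoly_succ {K : Type*} [Field K] (Z : ℕ → K) (n : ℕ) :
    Spoly Z (n + 1) = Spoly Z n * Z (n + 2) + ∏ j ∈ Icc 1 n, Z j := by
  have hlast : Icc 1 (n + 2) \ {n + 1, n + 2} = Icc 1 n := by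
    ext x; simp only [mem_sdiff, mem_Icc, mem_insert, mem_singleton]; omega
  have hinsert : ∀ k ∈ Icc 1 n,
      Icc 1 (n + 2) \ {k, k + 1} = insert (n + 2) (Icc 1 (n + 1) \ {k, k + 1}) := by
    intro k hk
    ext x; simp only [mem_sdiff, mem_Icc, mem_insert, mem_singleton] at hk ⊢; omega
  rw [Spoly_eq_sum, Spoly_eq_sum, sum_Icc_succ_top (by omega), hlast, sum_mul]
  congr 1
  refine sum_congr rfl fun k hk => ?_
  rw [hinsert k hk, prod_insert (by simp), mul_comm]

section Exchange

variable {K : Type*} [Field K] {N : ℕ} {W : K} {Z : ℕ → K}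

lemma prod_Icc_ne_zero (hZ : ∀ i, 1 ≤ i → i ≤ N + 1 → Z i ≠ 0) {a b : ℕ} (ha : 1 ≤ a)
    (hb : b ≤ N + 1) : ∏ j ∈ Icc a b, Z j ≠ 0 :=
  prod_ne_zero_iff.mpr fun j hj => hZ j (by grind) (by grind)

lemma Wnew_ne_zero (hW : W ≠ 0) (hZ : ∀ i, 1 ≤ i → i ≤ N + 1 → Z i ≠ 0) : Wnew N W Z ≠ 0 :=
  mul_ne_zero (mul_ne_zero hW (hZ 1 le_rfl (by omega))) (prod_Icc_ne_zero hZ le_rfl le_rfl)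

lemma Znew_div_Wnew (hZ : ∀ i, 1 ≤ i → i ≤ N + 1 → Z i ≠ 0) {i : ℕ} (hi : i ≤ N) :
    Znew N W Z i / Wnew N W Z =
      (Z (N + 1) * ∏ j ∈ Icc 2 (i + 1), Z j + W ^ 2 * Spoly Z i) /
        (W * ∏ j ∈ Icc 1 i, Z j) := by
  have hsplit := prod_Icc_mul_prod_Icc Z (Nat.zero_le i) (show i ≤ N + 1 by omega)
  rw [zero_add] at hsplit
  have hc : Z 1 * ∏ j ∈ Icc (i + 1) (N + 1), Z j ≠ 0 :=
    mul_ne_zero (hZ 1 le_rfl (by omega)) (prod_Icc_ne_zero hZ (by omega) le_rfl)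
  rw [Znew, if_neg (by omega), Wnew, ← hsplit, ← mul_div_mul_left _ (W * _) hc]
  ring

lemma Znew_one_div_Wnew (hZ : ∀ i, 1 ≤ i → i ≤ N + 1 → Z i ≠ 0) (hN : 1 ≤ N) :
    Znew N W Z 1 / Wnew N W Z = (Z (N + 1) * Z 2 + W ^ 2) / (W * Z 1) := by
  simp [Znew_div_Wnew hZ hN, Spoly]

lemma Znew_zero_div_Wnew (hZ : ∀ i, 1 ≤ i → i ≤ N + 1 → Z i ≠ 0) :
    Znew N W Z 0 / Wnew N W Z = Z (N + 1) / W := by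
  simp [Znew_div_Wnew hZ (Nat.zero_le N), Spoly]

lemma exchange_succ (hW : W ≠ 0) (hZ : ∀ i, 1 ≤ i → i ≤ N + 1 → Z i ≠ 0) {n : ℕ}
    (hn : n + 1 ≤ N) :
    Znew N W Z (n + 1) / Wnew N W Z * (Z (n + 1) / W) =
      Znew N W Z n / Wnew N W Z * (Z (n + 2) / W) + 1 := by
  rw [Znew_div_Wnew hZ hn, Znew_div_Wnew hZ (by omega), Spoly_succ,
    prod_Icc_succ_top (show 2 ≤ n + 1 + 1 by omega), prod_Icc_succ_top (show 1 ≤ n + 1 by omega)]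
  have hP := prod_Icc_ne_zero hZ le_rfl (show n ≤ N + 1 by omega)
  have hZn := hZ (n + 1) le_add_self (by omega)
  field_simp
  ring

lemma exchange_last (hW : W ≠ 0) (hZ : ∀ i, 1 ≤ i → i ≤ N + 1 → Z i ≠ 0) (hN : 1 ≤ N) :
    Znew N W Z (N + 1) / Wnew N W Z * (Z (N + 1) / W) =
      Znew N W Z N / Wnew N W Z * (Znew N W Z 1 / Wnew N W Z) + 1 := by
  rw [Znew_div_Wnew hZ le_rfl, Znew_one_div_Wnew hZ hN, Znew, if_pos rfl, Wnew,
    prod_Icc_succ_top (show 1 ≤ N + 1 by omega)]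
  have hP := prod_Icc_ne_zero hZ le_rfl (show N ≤ N + 1 by omega)
  have hZ1 := hZ 1 le_rfl (by omega)
  have hZN := hZ (N + 1) (by omega) le_rfl
  field_simp
  ring

end Exchange

theorem stmt17 {K : Type*} [Field K] (N : ℕ) (hN : 2 ≤ N) (W : K) (Z : ℕ → K)
    (hW : W ≠ 0) (hZ : ∀ i, 1 ≤ i → i ≤ N + 1 → Z i ≠ 0) :
    Wnew N W Z ≠ 0 ∧
    Znew N W Z 1 / Wnew N W Z * (Z 1 / W) = Z (N + 1) / W * (Z 2 / W) + 1 ∧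
    (∀ i, 2 ≤ i → i ≤ N →
      Znew N W Z i / Wnew N W Z * (Z i / W) =
        Znew N W Z (i - 1) / Wnew N W Z * (Z (i + 1) / W) + 1) ∧
    Znew N W Z (N + 1) / Wnew N W Z * (Z (N + 1) / W) =
      Znew N W Z N / Wnew N W Z * (Znew N W Z 1 / Wnew N W Z) + 1 := by
  refine ⟨Wnew_ne_zero hW hZ, ?_, fun i hi hiN => ?_, exchange_last hW hZ (by omega)⟩
  · rw [← Znew_zero_div_Wnew hZ]
    exact exchange_succ hW hZ (by omega)
  · obtain ⟨n, rfl⟩ : ∃ n, i = n + 1 := ⟨i - 1, by omega⟩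
    exact exchange_succ hW hZ hiN
end

section
/- Let N ≥ 3, let a_1,…,a_N and b_1,…,b_N be elements of K with a_i ≠ b_i for every i = 1,…,N−1. If ζ = (ζ_1,…,ζ_{N+1}) ∈ K^{N+1} satisfies both linear systems ζ_i − a_i ζ_{i+1} + ζ_{i+2} = 0 and ζ_i − b_i ζ_{i+1} + ζ_{i+2} = 0 for all i = 1,…,N−1, then ζ = 0. Since ζ = 0 does not satisfy the quadric equation ζ_1 ζ_N − a_N ζ_1 ζ_{N+1} + ζ_2 ζ_{N+1} + 1 = 0, the two affine curves γ_a := { ζ ∈ K^{N+1} : ζ_i − a_i ζ_{i+1} + ζ_{i+2} = 0 for i = 1,…,N−1 and ζ_1 ζ_N − a_N ζ_1 ζ_{N+1} + ζ_2 ζ_{N+1} + 1 = 0 } and γ_b (defined with b in place of a) are disjoint. -/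
theorem stmt18 {K : Type*} [Field K] (N : ℕ) (hN : 3 ≤ N) (a b : ℕ → K)
    (hab : ∀ i, 1 ≤ i → i ≤ N - 1 → a i ≠ b i) :
    (∀ ζ : ℕ → K,
      (∀ i, 1 ≤ i → i ≤ N - 1 → ζ i - a i * ζ (i + 1) + ζ (i + 2) = 0) →
      (∀ i, 1 ≤ i → i ≤ N - 1 → ζ i - b i * ζ (i + 1) + ζ (i + 2) = 0) →
      ∀ i, 1 ≤ i → i ≤ N + 1 → ζ i = 0) ∧
    (∀ ζ : ℕ → K,
      ¬(((∀ i, 1 ≤ i → i ≤ N - 1 → ζ i - a i * ζ (i + 1) + ζ (i + 2) = 0) ∧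
          ζ 1 * ζ N - a N * ζ 1 * ζ (N + 1) + ζ 2 * ζ (N + 1) + 1 = 0) ∧
        ((∀ i, 1 ≤ i → i ≤ N - 1 → ζ i - b i * ζ (i + 1) + ζ (i + 2) = 0) ∧
          ζ 1 * ζ N - b N * ζ 1 * ζ (N + 1) + ζ 2 * ζ (N + 1) + 1 = 0))) := by
  have key : ∀ ζ : ℕ → K,
      (∀ i, 1 ≤ i → i ≤ N - 1 → ζ i - a i * ζ (i + 1) + ζ (i + 2) = 0) →
      (∀ i, 1 ≤ i → i ≤ N - 1 → ζ i - b i * ζ (i + 1) + ζ (i + 2) = 0) →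
      ∀ i, 1 ≤ i → i ≤ N + 1 → ζ i = 0 := by
    intro ζ h1 h2
    have hmid : ∀ j, 2 ≤ j → j ≤ N → ζ j = 0 := by
      intro j hj1 hj2
      have e1 := h1 (j - 1) (by omega) (by omega)
      have e2 := h2 (j - 1) (by omega) (by omega)
      have hj : j - 1 + 1 = j := by omega
      rw [hj] at e1 e2
      have hd := hab (j - 1) (by omega) (by omega)
      have hz : (a (j - 1) - b (j - 1)) * ζ j = 0 := by linear_combination e2 - e1
      rcases mul_eq_zero.mp hz with h | h
      · exact absurd (sub_eq_zero.mp h) hd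
      · exact h
    intro i hi1 hi2
    by_cases hc1 : 2 ≤ i ∧ i ≤ N
    · exact hmid i hc1.1 hc1.2
    · rcases (by omega : i = 1 ∨ i = N + 1) with rfl | rfl
      · have e := h1 1 le_rfl (by omega)
        rw [hmid 2 (by omega) (by omega), hmid 3 (by omega) (by omega)] at e
        linear_combination e
      · have e := h1 (N - 1) (by omega) (by omega)
        have h1' : N - 1 + 1 = N := by omega
        have h2' : N - 1 + 2 = N + 1 := by omega
        rw [h1', h2', hmid (N - 1) (by omega) (by omega),
          hmid N (by omega) (by omega)] at e
        linear_combination e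
  refine ⟨key, ?_⟩
  rintro ζ ⟨⟨ha1, ha2⟩, hb1, _⟩
  have z1 := key ζ ha1 hb1 1 (by omega) (by omega)
  have z2 := key ζ ha1 hb1 2 (by omega) (by omega)
  rw [z1, z2] at ha2
  simp at ha2
end
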